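/- arXiv:2203.10450 — 8 statements merged into one kernel-verified Lean document; each statement's English description precedes it below -/
import Mathlib

section
/- Let σ ∈ ℕ and let f : ℝⁿ → ℝ be infinitely differentiable (C^∞). Then f(δ_t(x)) = t^σ · f(x) holds for all t > 0 and all x ∈ ℝⁿ if and only if f is a polynomial function of the form f(x) = Σ_β c_β · x₁^{β₁}·x₂^{β₂}·⋯·xₙ^{βₙ}, where the sum ranges over multi-indices β ∈ ℕⁿ satisfying α₁β₁ + α₂β₂ + ⋯ + αₙβₙ = σ. -/
open Filter Topology

namespace Stmt0Aux

variable {n : ℕ}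

def T (α : Fin n → ℕ) (m : ℕ) : Finset (Fin n → ℕ) :=
  (Fintype.piFinset fun _ => Finset.range (m+1)).filter fun β => ∑ i, α i * β i = m

lemma mem_T {α : Fin n → ℕ} (hα : ∀ i, 0 < α i) {m : ℕ} {β : Fin n → ℕ} :
    β ∈ T α m ↔ ∑ i, α i * β i = m := by
  simp only [T, Finset.mem_filter, Fintype.mem_piFinset, Finset.mem_range]
  constructor
  · rintro ⟨-, h⟩; exact h
  · intro h
    refine ⟨fun i => ?_, h⟩
    have h1 : α i * β i ≤ m := h ▸ Finset.single_le_sum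
      (f := fun i => α i * β i) (fun _ _ => Nat.zero_le _) (Finset.mem_univ i)
    have h2 := Nat.le_mul_of_pos_left (β i) (hα i)
    omega

lemma shift {α : Fin n → ℕ} (hα : ∀ i, 0 < α i) {m : ℕ} (i : Fin n) (hi : α i ≤ m)
    (c : (Fin n → ℕ) → ℝ) (x : Fin n → ℝ) :
    ∑ β ∈ T α m, (if 0 < β i then c (Function.update β i (β i - 1)) else 0) * ∏ j, x j ^ β j
      = x i * ∑ β ∈ T α (m - α i), c β * ∏ j, x j ^ β j := by
  rw [Finset.mul_sum]
  have step1 : ∑ β ∈ T α m,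
      (if 0 < β i then c (Function.update β i (β i - 1)) else 0) * ∏ j, x j ^ β j
      = ∑ β ∈ (T α m).filter (fun β => 0 < β i),
          c (Function.update β i (β i - 1)) * ∏ j, x j ^ β j := by
    rw [Finset.sum_filter]
    refine Finset.sum_congr rfl fun β _ => ?_
    split <;> simp
  rw [step1]
  refine Finset.sum_nbij' (i := fun β => Function.update β i (β i - 1))
    (j := fun β => Function.update β i (β i + 1)) ?_ ?_ ?_ ?_ ?_
  · -- maps into T α (m - α i)
    intro β hβ
    rw [Finset.mem_filter] at hβ
    obtain ⟨hβm, hβi⟩ := hβ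
    rw [mem_T hα] at hβm ⊢
    beta_reduce
    rw [← Finset.add_sum_erase _ _ (Finset.mem_univ i)] at hβm ⊢
    have he : ∑ j ∈ Finset.univ.erase i, α j * Function.update β i (β i - 1) j
        = ∑ j ∈ Finset.univ.erase i, α j * β j := by
      refine Finset.sum_congr rfl fun j hj => ?_
      rw [Function.update_of_ne (Finset.mem_erase.1 hj).1]
    rw [he, Function.update_self]
    have hb : α i * (β i - 1) + α i = α i * β i := by
      have : β i - 1 + 1 = β i := Nat.succ_pred_eq_of_pos hβi
      calc α i * (β i - 1) + α i = α i * (β i - 1 + 1) := by ring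
        _ = α i * β i := by rw [this]
    have hle : α i ≤ α i * β i := Nat.le_mul_of_pos_right _ hβi
    omega
  · -- inverse maps into filter
    intro β hβ
    rw [mem_T hα] at hβ
    rw [Finset.mem_filter, mem_T hα]
    beta_reduce
    constructor
    · rw [← Finset.add_sum_erase _ _ (Finset.mem_univ i)]
      rw [← Finset.add_sum_erase _ _ (Finset.mem_univ i)] at hβ
      have he : ∑ j ∈ Finset.univ.erase i, α j * Function.update β i (β i + 1) j
          = ∑ j ∈ Finset.univ.erase i, α j * β j := by
        refine Finset.sum_congr rfl fun j hj => ?_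
        rw [Function.update_of_ne (Finset.mem_erase.1 hj).1]
      rw [he, Function.update_self]
      have : α i * (β i + 1) = α i * β i + α i := by ring
      omega
    · rw [Function.update_self]; omega
  · intro β hβ
    rw [Finset.mem_filter] at hβ
    beta_reduce
    funext j
    rcases eq_or_ne j i with rfl | hne
    · rw [Function.update_self, Function.update_self]
      omega
    · rw [Function.update_of_ne hne, Function.update_of_ne hne]
  · intro β hβ
    beta_reduce
    funext j
    rcases eq_or_ne j i with rfl | hne
    · rw [Function.update_self, Function.update_self]; omega
    · rw [Function.update_of_ne hne, Function.update_of_ne hne]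
  · -- terms agree
    intro β hβ
    rw [Finset.mem_filter] at hβ
    obtain ⟨-, hβi⟩ := hβ
    have hprod : ∏ j, x j ^ β j = x i * ∏ j, x j ^ Function.update β i (β i - 1) j := by
      rw [← Finset.mul_prod_erase _ _ (Finset.mem_univ i),
          ← Finset.mul_prod_erase _ (fun j => x j ^ Function.update β i (β i - 1) j)
            (Finset.mem_univ i)]
      have he : ∏ j ∈ Finset.univ.erase i, x j ^ Function.update β i (β i - 1) j
          = ∏ j ∈ Finset.univ.erase i, x j ^ β j := by
        refine Finset.prod_congr rfl fun j hj => ?_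
        rw [Function.update_of_ne (Finset.mem_erase.1 hj).1]
      rw [he, Function.update_self, ← mul_assoc]
      congr 1
      rw [← pow_succ']
      congr 1
      omega
    rw [hprod]; ring

noncomputable def Lmap (α : Fin n → ℕ) (t : ℝ) : (Fin n → ℝ) →L[ℝ] (Fin n → ℝ) :=
  ContinuousLinearMap.pi fun i => (t ^ α i) • ContinuousLinearMap.proj i

lemma Lmap_apply (α : Fin n → ℕ) (t : ℝ) (x : Fin n → ℝ) :
    Lmap α t x = fun i => t ^ α i * x i := by
  ext i
  simp [Lmap]

noncomputable def D (f : (Fin n → ℝ) → ℝ) (i : Fin n) (x : Fin n → ℝ) : ℝ :=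
  fderiv ℝ f x (Pi.single i 1)

lemma contDiff_D {f : (Fin n → ℝ) → ℝ} (hf : ContDiff ℝ (⊤ : ℕ∞) f) (i : Fin n) :
    ContDiff ℝ (⊤ : ℕ∞) (D f i) := by
  exact (hf.fderiv_right (by simp)).clm_apply contDiff_const

lemma D_homog {α : Fin n → ℕ} {σ : ℕ} {f : (Fin n → ℝ) → ℝ} (hf : ContDiff ℝ (⊤ : ℕ∞) f)
    (H : ∀ t : ℝ, 0 < t → ∀ x : Fin n → ℝ, f (fun i => t ^ α i * x i) = t ^ σ * f x)
    (i : Fin n) (t : ℝ) (ht : 0 < t) (x : Fin n → ℝ) :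
    t ^ α i * D f i (fun j => t ^ α j * x j) = t ^ σ * D f i x := by
  have hfd : Differentiable ℝ f := hf.differentiable (by simp)
  have hcomp : (fun y => f (Lmap α t y)) = fun y => t ^ σ * f y := by
    funext y
    rw [Lmap_apply]
    exact H t ht y
  have h1 : fderiv ℝ (fun y => f (Lmap α t y)) x
      = ((fderiv ℝ f (Lmap α t x)).comp (Lmap α t)) := by
    have := fderiv_comp (𝕜 := ℝ) x (hfd (Lmap α t x)) ((Lmap α t).differentiableAt)
    simpa [Function.comp_def, (Lmap α t).fderiv] using this
  have h2 : fderiv ℝ (fun y => t ^ σ * f y) x = (t ^ σ) • fderiv ℝ f x := by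
    exact fderiv_const_mul (hfd x) _
  rw [hcomp, h2] at h1
  have h3 := congrFun (congrArg (fun (L : (Fin n → ℝ) →L[ℝ] ℝ) => (L : (Fin n → ℝ) → ℝ)) h1) (Pi.single i 1)
  simp only [ContinuousLinearMap.smul_apply, ContinuousLinearMap.coe_comp', Function.comp] at h3
  have h4 : Lmap α t (Pi.single i 1) = (t ^ α i) • (Pi.single i 1 : Fin n → ℝ) := by
    ext j
    rcases eq_or_ne j i with rfl | hne
    · simp [Lmap]
    · simp [Lmap, Pi.single_eq_of_ne hne]
  rw [h4, (fderiv ℝ f (Lmap α t x)).map_smul] at h3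
  rw [Lmap_apply] at h3
  simpa [D, smul_eq_mul] using h3.symm

lemma euler {α : Fin n → ℕ} {σ : ℕ} {f : (Fin n → ℝ) → ℝ} (hf : ContDiff ℝ (⊤ : ℕ∞) f)
    (H : ∀ t : ℝ, 0 < t → ∀ x : Fin n → ℝ, f (fun i => t ^ α i * x i) = t ^ σ * f x)
    (x : Fin n → ℝ) :
    (σ : ℝ) * f x = ∑ i, (α i : ℝ) * x i * D f i x := by
  have hfd : Differentiable ℝ f := hf.differentiable (by simp)
  have hγ : HasDerivAt (fun t : ℝ => (fun i => t ^ α i * x i))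
      (fun i => (α i : ℝ) * 1 ^ (α i - 1) * x i) 1 := by
    rw [hasDerivAt_pi]
    intro i
    simpa using (hasDerivAt_pow (α i) (1:ℝ)).mul_const (x i)
  have hγ1 : (fun i => (1:ℝ) ^ α i * x i) = x := by
    funext i; simp
  have hx : HasFDerivAt f (fderiv ℝ f x) (fun i => (1:ℝ) ^ α i * x i) := by
    rw [hγ1]; exact (hfd x).hasFDerivAt
  have h1 : HasDerivAt (fun t : ℝ => f (fun i => t ^ α i * x i))
      (fderiv ℝ f x (fun i => (α i : ℝ) * 1 ^ (α i - 1) * x i)) 1 :=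
    hx.comp_hasDerivAt 1 hγ
  have heq : (fun t : ℝ => f (fun i => t ^ α i * x i)) =ᶠ[𝓝 (1:ℝ)] fun t => t ^ σ * f x := by
    filter_upwards [eventually_gt_nhds (show (0:ℝ) < 1 by norm_num)] with t ht
    exact H t ht x
  have h2 : HasDerivAt (fun t : ℝ => f (fun i => t ^ α i * x i)) ((σ : ℝ) * f x) 1 := by
    have : HasDerivAt (fun t : ℝ => t ^ σ * f x) ((σ : ℝ) * 1 ^ (σ - 1) * f x) 1 :=
      (hasDerivAt_pow σ (1:ℝ)).mul_const (f x)
    have := this.congr_of_eventuallyEq heq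
    simpa using this
  have h3 := h1.unique h2
  rw [← h3]
  have hv : (fun i => (α i : ℝ) * 1 ^ (α i - 1) * x i)
      = ∑ i, ((α i : ℝ) * x i) • (Pi.single i 1 : Fin n → ℝ) := by
    funext j
    simp only [Finset.sum_apply, Pi.smul_apply, Pi.single_apply, smul_eq_mul,
      mul_ite, mul_one, mul_zero, one_pow, Finset.sum_ite_eq, Finset.mem_univ, if_true]
  rw [hv, map_sum]
  refine Finset.sum_congr rfl fun i _ => ?_
  rw [(fderiv ℝ f x).map_smul]
  simp [D, smul_eq_mul]

lemma tendsto_dil {α : Fin n → ℕ} (hα : ∀ i, 0 < α i) (x : Fin n → ℝ) :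
    Tendsto (fun t : ℝ => (fun i => t ^ α i * x i)) (𝓝[>] (0:ℝ)) (𝓝 (0 : Fin n → ℝ)) := by
  rw [tendsto_pi_nhds]
  intro i
  have h1 : Tendsto (fun t : ℝ => t ^ α i * x i) (𝓝 (0:ℝ)) (𝓝 ((0:ℝ) ^ α i * x i)) :=
    ((continuous_pow (α i)).tendsto 0).mul_const (x i)
  have h2 : (0:ℝ) ^ α i * x i = 0 := by rw [zero_pow (hα i).ne', zero_mul]
  rw [h2] at h1
  exact h1.mono_left nhdsWithin_le_nhds

lemma eq_of_tendsto_dil {α : Fin n → ℕ} (hα : ∀ i, 0 < α i) {g : (Fin n → ℝ) → ℝ}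
    (hg : Continuous g) {c : ℝ} (x : Fin n → ℝ)
    {φ : ℝ → ℝ} (hφ : Tendsto φ (𝓝[>] (0:ℝ)) (𝓝 c))
    (heq : ∀ t : ℝ, 0 < t → g x = φ t * g (fun i => t ^ α i * x i)) :
    g x = c * g 0 := by
  have h1 : Tendsto (fun t : ℝ => φ t * g (fun i => t ^ α i * x i)) (𝓝[>] (0:ℝ))
      (𝓝 (c * g 0)) := hφ.mul ((hg.tendsto 0).comp (tendsto_dil hα x))
  have h2 : Tendsto (fun _ : ℝ => g x) (𝓝[>] (0:ℝ)) (𝓝 (c * g 0)) := by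
    refine h1.congr' ?_
    filter_upwards [self_mem_nhdsWithin] with t ht
    exact (heq t ht).symm
  exact tendsto_nhds_unique tendsto_const_nhds h2

lemma const_of_invariant {α : Fin n → ℕ} (hα : ∀ i, 0 < α i) {g : (Fin n → ℝ) → ℝ}
    (hg : Continuous g)
    (H : ∀ t : ℝ, 0 < t → ∀ x : Fin n → ℝ, g (fun i => t ^ α i * x i) = g x)
    (x : Fin n → ℝ) : g x = g 0 := by
  have := eq_of_tendsto_dil hα hg (c := 1) x (φ := fun _ => 1) tendsto_const_nhds
    (fun t ht => by rw [one_mul, H t ht x])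
  simpa using this

lemma zero_of_neg_degree {α : Fin n → ℕ} (hα : ∀ i, 0 < α i) {g : (Fin n → ℝ) → ℝ}
    (hg : Continuous g) {a σ : ℕ} (hlt : σ < a)
    (H : ∀ t : ℝ, 0 < t → ∀ x : Fin n → ℝ, t ^ a * g (fun i => t ^ α i * x i) = t ^ σ * g x)
    (x : Fin n → ℝ) : g x = 0 := by
  have key : ∀ t : ℝ, 0 < t → g x = t ^ (a - σ) * g (fun i => t ^ α i * x i) := by
    intro t ht
    have h := H t ht x
    have hts : (t:ℝ) ^ σ ≠ 0 := pow_ne_zero _ ht.ne'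
    have hpow : t ^ a = t ^ σ * t ^ (a - σ) := by
      rw [← pow_add]; congr 1; omega
    rw [hpow, mul_assoc] at h
    exact (mul_left_cancel₀ hts h).symm
  have hφ : Tendsto (fun t : ℝ => t ^ (a - σ)) (𝓝[>] (0:ℝ)) (𝓝 (0:ℝ)) := by
    have h1 : Tendsto (fun t : ℝ => t ^ (a - σ)) (𝓝 (0:ℝ)) (𝓝 ((0:ℝ) ^ (a - σ))) :=
      (continuous_pow _).tendsto 0
    rw [zero_pow (by omega : a - σ ≠ 0)] at h1
    exact h1.mono_left nhdsWithin_le_nhds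
  have := eq_of_tendsto_dil hα hg (c := 0) x hφ key
  simpa using this

lemma key (α : Fin n → ℕ) (hα : ∀ i, 0 < α i) :
    ∀ σ : ℕ, ∀ f : (Fin n → ℝ) → ℝ, ContDiff ℝ (⊤ : ℕ∞) f →
    (∀ t : ℝ, 0 < t → ∀ x : Fin n → ℝ, f (fun i => t ^ α i * x i) = t ^ σ * f x) →
    ∃ c : (Fin n → ℕ) → ℝ, ∀ x, f x = ∑ β ∈ T α σ, c β * ∏ i, x i ^ β i := by
  intro σ
  induction σ using Nat.strong_induction_on with
  | _ σ IH =>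
    intro f hf H
    rcases Nat.eq_zero_or_pos σ with rfl | hσ
    · refine ⟨fun _ => f 0, fun x => ?_⟩
      have hc := const_of_invariant hα hf.continuous (fun t ht x => by simpa using H t ht x) x
      have hT0 : T α 0 = {fun _ => 0} := by
        ext β
        rw [mem_T hα, Finset.mem_singleton]
        constructor
        · intro h
          funext i
          have h1 : α i * β i = 0 :=
            (Finset.sum_eq_zero_iff).mp h i (Finset.mem_univ i)
          rcases Nat.mul_eq_zero.mp h1 with h2 | h2
          · exact absurd h2 (hα i).ne'
          · exact h2
        · rintro rfl; simp
      rw [hT0, Finset.sum_singleton]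
      simp only [pow_zero, Finset.prod_const_one, mul_one]
      exact hc
    · have hDc : ∀ i, ContDiff ℝ (⊤ : ℕ∞) (D f i) := contDiff_D hf
      have hDh : ∀ i, ∀ t : ℝ, 0 < t → ∀ x : Fin n → ℝ,
          t ^ α i * D f i (fun j => t ^ α j * x j) = t ^ σ * D f i x :=
        fun i t ht x => D_homog hf H i t ht x
      have hper : ∀ i : Fin n, ∃ c : (Fin n → ℕ) → ℝ,
          ∀ x : Fin n → ℝ, x i * D f i x = ∑ β ∈ T α σ, c β * ∏ j, x j ^ β j := by
        intro i
        rcases le_or_gt (α i) σ with hle | hlt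
        · have hhom : ∀ t : ℝ, 0 < t → ∀ x : Fin n → ℝ,
              D f i (fun j => t ^ α j * x j) = t ^ (σ - α i) * D f i x := by
            intro t ht x
            have h := hDh i t ht x
            have hta : (t:ℝ) ^ α i ≠ 0 := pow_ne_zero _ ht.ne'
            have hpow : t ^ σ = t ^ α i * t ^ (σ - α i) := by
              rw [← pow_add, Nat.add_sub_cancel' hle]
            rw [hpow, mul_assoc] at h
            exact mul_left_cancel₀ hta h
          obtain ⟨c, hc⟩ := IH (σ - α i) (by have := hα i; omega) (D f i) (hDc i) hhom
          refine ⟨fun β => if 0 < β i then c (Function.update β i (β i - 1)) else 0,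
            fun x => ?_⟩
          rw [shift hα i hle c x, ← hc x]
        · have hz : ∀ x, D f i x = 0 :=
            zero_of_neg_degree hα (hDc i).continuous hlt (fun t ht x => hDh i t ht x)
          exact ⟨fun _ => 0, fun x => by simp [hz x]⟩
      choose cc hcc using hper
      refine ⟨fun β => (σ : ℝ)⁻¹ * ∑ i, (α i : ℝ) * cc i β, fun x => ?_⟩
      have he := euler hf H x
      have hσ' : ((σ : ℝ)) ≠ 0 := Nat.cast_ne_zero.mpr hσ.ne'
      calc f x = (σ : ℝ)⁻¹ * ((σ : ℝ) * f x) := by field_simp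
        _ = (σ : ℝ)⁻¹ * ∑ i, (α i : ℝ) * x i * D f i x := by rw [he]
        _ = (σ : ℝ)⁻¹ * ∑ i, (α i : ℝ) * ∑ β ∈ T α σ, cc i β * ∏ j, x j ^ β j := by
            congr 1
            refine Finset.sum_congr rfl fun i _ => ?_
            rw [← hcc i x]; ring
        _ = (σ : ℝ)⁻¹ * ∑ i, ∑ β ∈ T α σ, (α i : ℝ) * (cc i β * ∏ j, x j ^ β j) := by
            congr 1
            exact Finset.sum_congr rfl fun i _ => Finset.mul_sum _ _ _
        _ = (σ : ℝ)⁻¹ * ∑ β ∈ T α σ, ∑ i, (α i : ℝ) * (cc i β * ∏ j, x j ^ β j) := by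
            rw [Finset.sum_comm]
        _ = ∑ β ∈ T α σ, ((σ : ℝ)⁻¹ * ∑ i, (α i : ℝ) * cc i β) * ∏ j, x j ^ β j := by
            rw [Finset.mul_sum]
            refine Finset.sum_congr rfl fun β _ => ?_
            simp only [Finset.sum_mul, Finset.mul_sum]
            exact Finset.sum_congr rfl fun i _ => by ring

end Stmt0Aux



/-- A smooth function `f : ℝⁿ → ℝ` satisfies
`f (δ_t x) = t^σ · f x` for all `t > 0` and all `x` (where `δ_t` is the anisotropic
dilation with exponents `α i`) if and only if `f` is a polynomial function
`f x = Σ_β c_β x^β`, the sum ranging over multi-indices `β` with `Σ_i α_i β_i = σ`. -/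
theorem stmt0 (n : ℕ) (α : Fin n → ℕ) (hα : ∀ i, 0 < α i) (σ : ℕ)
    (f : (Fin n → ℝ) → ℝ) (hf : ContDiff ℝ (⊤ : ℕ∞) f) :
    (∀ t : ℝ, 0 < t → ∀ x : Fin n → ℝ, f (fun i => t ^ α i * x i) = t ^ σ * f x) ↔
    ∃ (S : Finset (Fin n → ℕ)) (c : (Fin n → ℕ) → ℝ),
      (∀ β ∈ S, ∑ i, α i * β i = σ) ∧
      ∀ x : Fin n → ℝ, f x = ∑ β ∈ S, c β * ∏ i, x i ^ β i := by
  constructor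
  · intro H
    obtain ⟨c, hc⟩ := Stmt0Aux.key α hα σ f hf H
    exact ⟨Stmt0Aux.T α σ, c, fun β hβ => (Stmt0Aux.mem_T hα).mp hβ, hc⟩
  · rintro ⟨S, c, hS, hc⟩ t ht x
    rw [hc, hc, Finset.mul_sum]
    refine Finset.sum_congr rfl fun β hβ => ?_
    have hp : ∏ i, (t ^ α i * x i) ^ β i = t ^ σ * ∏ i, x i ^ β i := by
      rw [← hS β hβ, ← Finset.prod_pow_eq_pow_sum, ← Finset.prod_mul_distrib]
      refine Finset.prod_congr rfl fun i _ => ?_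
      rw [mul_pow, ← pow_mul]
    rw [hp]; ring
end

section
/- (i) For any bounded open sets Ω₁, Ω₂ ⊆ ℝⁿ each containing the origin, there exists a constant C ≥ 1 such that C⁻¹ · ∫_{Ω₂} Λ(x,r)⁻¹ dx ≤ ∫_{Ω₁} Λ(x,r)⁻¹ dx ≤ C · ∫_{Ω₂} Λ(x,r)⁻¹ dx for all r > 0 (as integrals with values in [0,∞]). (ii) If moreover there is a set 𝒜 = {i₁ < … < i_v} ⊆ {1,…,n} with 1 ≤ v ≤ n such that every f_k(x) depends only on the coordinates (x_{i₁},…,x_{i_v}), then for every bounded open Ω ⊆ ℝⁿ containing the origin and every bounded open Ω′ ⊆ ℝ^v containing the origin there exists C ≥ 1 such that C⁻¹ · ∫_{Ω′} Λ(ι(z),r)⁻¹ dz ≤ ∫_{Ω} Λ(x,r)⁻¹ dx ≤ C · ∫_{Ω′} Λ(ι(z),r)⁻¹ dz for all r > 0, where ι(z) ∈ ℝⁿ is the point whose i_m-th coordinate is z_m for m = 1,…,v and whose other coordinates are 0. -/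
open MeasureTheory
open scoped ENNReal

/-- The Nagel–Stein–Wainger type polynomial `Λ(x,r) = Σ_{k=w}^{Q} f_k(x) r^k`. -/
noncomputable def LamNSW (n w : ℕ) (α : Fin n → ℕ) (f : ℕ → (Fin n → ℝ) → ℝ)
    (x : Fin n → ℝ) (r : ℝ) : ℝ :=
  ∑ k ∈ Finset.Icc w (∑ i, α i), f k x * r ^ k

/-- The integral `∫_Ω Λ(x,r)⁻¹ dx` with values in `[0,∞]`. -/
noncomputable def JNSW (n w : ℕ) (α : Fin n → ℕ) (f : ℕ → (Fin n → ℝ) → ℝ)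
    (Ω : Set (Fin n → ℝ)) (r : ℝ) : ℝ≥0∞ :=
  ∫⁻ x in Ω, ENNReal.ofReal (LamNSW n w α f x r)⁻¹

/-!
For `t ≥ 1` we have `Λ(δ_t x, r) ≥ Λ(x, r)`, since `f_k(δ_t x) = t^(Q-k) f_k(x)` with `Q - k ≥ 0`;
so `x ↦ Λ(x, r)⁻¹` decreases along dilations. Substituting `x = δ_t y` (Jacobian `t^Q`), the
integral of such a function over `δ_t V` is at most `t^Q` times its integral over `V`. A bounded
set lies in `δ_t V` for every neighbourhood `V` of `0` once `t` is large, and `t` does not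
depend on `r`: this gives (i). For (ii), on the unit cube the integrand depends only on the
coordinates in `𝒜`, so by Fubini the `n`-dimensional integral over the cube is a fixed multiple
of the `v`-dimensional one, and (i) in dimensions `n` and `v` does the rest.
-/

open Set Function Metric
open scoped NNReal Topology

theorem lintegral_pi_comp_precomp {ι κ X : Type*} [Fintype ι] [Fintype κ] [MeasurableSpace X]
    {e : κ → ι} (he : Injective e) (μ : Measure X) [SigmaFinite μ]
    {Φ : (κ → X) → ℝ≥0∞} (hΦ : Measurable Φ) :
    ∫⁻ x, Φ (x ∘ e) ∂Measure.pi (fun _ => μ) =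
      μ univ ^ (Fintype.card ι - Fintype.card κ) * ∫⁻ z, Φ z ∂Measure.pi (fun _ => μ) := by
  classical
  -- `∃ m, e m = i` rather than `i ∈ range e`: the latter picks up the `Fintype` instance
  -- `fintypeRange`, which does not match the one inside `piEquivPiSubtypeProd`.
  set e' : κ ≃ {i // ∃ m, e m = i} := Equiv.ofInjective e he
  set ν := Measure.pi fun _ : {i // ∃ m, e m = i} => μ
  set ν' := Measure.pi fun _ : {i // ¬∃ m, e m = i} => μ
  set σ := MeasurableEquiv.piEquivPiSubtypeProd (fun _ : ι => X) (fun i => ∃ m, e m = i)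
  have hσ := measurePreserving_piEquivPiSubtypeProd (fun _ : ι => μ) (fun i => ∃ m, e m = i)
  have hσ_comp (q) : (σ.symm q) ∘ e = fun m => q.1 (e' m) := funext fun m => dif_pos ⟨m, rfl⟩
  have hν : ∫⁻ y, Φ (fun m => y (e' m)) ∂ν = ∫⁻ z, Φ z ∂Measure.pi (fun _ => μ) := by
    rw [← (measurePreserving_piCongrLeft (fun _ : {i // ∃ m, e m = i} => μ) e').lintegral_comp_emb
      (MeasurableEquiv.measurableEmbedding _)]
    simp only [MeasurableEquiv.piCongrLeft_apply_apply]
  have hν' : ν' univ = μ univ ^ (Fintype.card ι - Fintype.card κ) := by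
    rw [Measure.pi_univ, Finset.prod_const, Finset.card_univ, Fintype.card_subtype_compl,
      Fintype.card_congr e'.symm]
  calc ∫⁻ x, Φ (x ∘ e) ∂Measure.pi (fun _ => μ)
      = ∫⁻ q, Φ (fun m => q.1 (e' m)) * (fun _ => 1) q.2 ∂(ν.prod ν') := by
        rw [← (hσ.symm σ).lintegral_comp_emb σ.symm.measurableEmbedding]
        simp only [hσ_comp, mul_one]
        rfl
    _ = (∫⁻ y, Φ (fun m => y (e' m)) ∂ν) * ∫⁻ _, 1 ∂ν' :=
        lintegral_prod_mul (f := fun y : {i // ∃ m, e m = i} → X => Φ fun m => y (e' m))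
          (hΦ.comp (measurable_pi_lambda _ fun m => measurable_pi_apply _)).aemeasurable
          aemeasurable_const
    _ = _ := by rw [hν, lintegral_one, hν', mul_comm]

section PiBall

variable {ι κ : Type*} [Fintype ι] [Fintype κ]

theorem volume_restrict_ball_eq_pi (x : ι → ℝ) {r : ℝ} (hr : 0 < r) :
    volume.restrict (ball x r) = Measure.pi fun i => volume.restrict (ball (x i) r) := by
  rw [ball_pi x hr, volume_pi, Measure.restrict_pi_pi]

theorem setLIntegral_ball_comp_precomp {e : κ → ι} (he : Injective e)
    {Ψ : (κ → ℝ) → ℝ≥0∞} (hΨ : Measurable Ψ) :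
    ∫⁻ x in ball (0 : ι → ℝ) 1, Ψ (x ∘ e) =
      volume (ball (0 : ℝ) 1) ^ (Fintype.card ι - Fintype.card κ) *
        ∫⁻ z in ball (0 : κ → ℝ) 1, Ψ z := by
  rw [volume_restrict_ball_eq_pi _ one_pos, volume_restrict_ball_eq_pi _ one_pos,
    ← Measure.restrict_apply_univ]
  exact lintegral_pi_comp_precomp he (volume.restrict (ball (0 : ℝ) 1)) hΨ

end PiBall

def dilate {ι : Type*} (β : ι → ℕ) (t : ℝ) (x : ι → ℝ) : ι → ℝ := fun i => t ^ β i * x i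

theorem continuous_dilate {ι : Type*} (β : ι → ℕ) (t : ℝ) : Continuous (dilate β t) :=
  continuous_pi fun i => continuous_const.mul (continuous_apply i)

section Dilation

variable {ι : Type*} [Fintype ι] (β : ι → ℕ)

theorem smul_map_dilate_volume {t : ℝ} (ht : 0 < t) :
    ENNReal.ofReal (t ^ ∑ i, β i) • (volume : Measure (ι → ℝ)).map (dilate β t) = volume := by
  classical
  have hdiag : dilate β t = Matrix.toLin' (Matrix.diagonal fun i => t ^ β i) := by
    funext x i
    simp [dilate, Matrix.mulVec_diagonal]
  have hdet : (Matrix.diagonal fun i => t ^ β i).det = t ^ ∑ i, β i := by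
    rw [Matrix.det_diagonal, Finset.prod_pow_eq_pow_sum]
  have hpos : 0 < t ^ ∑ i, β i := pow_pos ht _
  simpa [hdiag, hdet, abs_of_pos hpos] using
    Real.smul_map_diagonal_volume_pi (D := fun i => t ^ β i) (hdet ▸ hpos.ne')

theorem setLIntegral_eq_mul_setLIntegral_comp_dilate {t : ℝ} (ht : 0 < t)
    {Φ : (ι → ℝ) → ℝ≥0∞} (hΦ : Measurable Φ) {s : Set (ι → ℝ)} (hs : MeasurableSet s) :
    ∫⁻ x in s, Φ x =
      ENNReal.ofReal (t ^ ∑ i, β i) * ∫⁻ y in dilate β t ⁻¹' s, Φ (dilate β t y) := by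
  conv_lhs => rw [← smul_map_dilate_volume β ht]
  rw [Measure.restrict_smul, lintegral_smul_measure, smul_eq_mul,
    setLIntegral_map hs hΦ (continuous_dilate β t).measurable]

variable {β}

theorem exists_preimage_dilate_subset (hβ : ∀ i, 0 < β i) {U V : Set (ι → ℝ)}
    (hU : Bornology.IsBounded U) (hV : V ∈ 𝓝 0) :
    ∃ t : ℝ, 1 ≤ t ∧ dilate β t ⁻¹' U ⊆ V := by
  obtain ⟨ε, hε, hball⟩ := Metric.mem_nhds_iff.mp hV
  obtain ⟨R, hR⟩ := hU.subset_closedBall 0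
  refine ⟨max 1 (R / ε + 1), le_max_left _ _, fun y hy => hball ?_⟩
  set t := max 1 (R / ε + 1)
  have hRt : R < t * ε := by
    have : R / ε < t := (lt_add_one _).trans_le (le_max_right _ _)
    rwa [div_lt_iff₀ hε] at this
  rw [mem_ball_zero_iff, pi_norm_lt_iff hε]
  intro i
  have hyi : ‖t ^ β i * y i‖ ≤ R :=
    (norm_le_pi_norm _ i).trans (mem_closedBall_zero_iff.mp (hR hy))
  have htβ : t ≤ t ^ β i := le_self_pow₀ (le_max_left _ _) (hβ i).ne'
  rw [norm_mul, Real.norm_of_nonneg (by positivity)] at hyi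
  by_contra! h
  have : t * ε ≤ t ^ β i * ‖y i‖ := mul_le_mul htβ h hε.le (by positivity)
  linarith

end Dilation

def LEUpToConst (A B : ℝ → ℝ≥0∞) : Prop := ∃ c : ℝ≥0, ∀ r, 0 < r → A r ≤ c * B r

namespace LEUpToConst

variable {A B D : ℝ → ℝ≥0∞}

theorem trans (h₁ : LEUpToConst A B) (h₂ : LEUpToConst B D) : LEUpToConst A D := by
  obtain ⟨c₁, h₁⟩ := h₁
  obtain ⟨c₂, h₂⟩ := h₂
  refine ⟨c₁ * c₂, fun r hr => (h₁ r hr).trans ?_⟩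
  rw [ENNReal.coe_mul, mul_assoc]
  gcongr
  exact h₂ r hr

theorem const_mul_left {c : ℝ≥0∞} (hc : c ≠ ∞) : LEUpToConst (fun r => c * B r) B :=
  ⟨c.toNNReal, fun r _ => by rw [ENNReal.coe_toNNReal hc]⟩

theorem const_mul_right {c : ℝ≥0∞} (hc : c ≠ 0) (hc' : c ≠ ∞) :
    LEUpToConst B (fun r => c * B r) :=
  ⟨c⁻¹.toNNReal, fun r _ => by
    rw [ENNReal.coe_toNNReal (ENNReal.inv_ne_top.mpr hc), ← mul_assoc,
      ENNReal.inv_mul_cancel hc hc', one_mul]⟩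

end LEUpToConst

def Comparable (A B : ℝ → ℝ≥0∞) : Prop := LEUpToConst A B ∧ LEUpToConst B A

namespace Comparable

variable {A B D : ℝ → ℝ≥0∞}

theorem trans (h₁ : Comparable A B) (h₂ : Comparable B D) : Comparable A D :=
  ⟨h₁.1.trans h₂.1, h₂.2.trans h₁.2⟩

theorem const_mul {c : ℝ≥0∞} (hc : c ≠ 0) (hc' : c ≠ ∞) : Comparable (fun r => c * B r) B :=
  ⟨LEUpToConst.const_mul_left hc', LEUpToConst.const_mul_right hc hc'⟩

theorem exists_two_sided (h : Comparable A B) :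
    ∃ C : ℝ, 1 ≤ C ∧ ∀ r, 0 < r →
      ENNReal.ofReal C⁻¹ * B r ≤ A r ∧ A r ≤ ENNReal.ofReal C * B r := by
  obtain ⟨⟨c₁, h₁⟩, ⟨c₂, h₂⟩⟩ := h
  set C : ℝ := max 1 (max c₁ c₂)
  have hC : 0 < C := one_pos.trans_le (le_max_left _ _)
  have hc₁ : (c₁ : ℝ≥0∞) ≤ ENNReal.ofReal C := by
    rw [← ENNReal.ofReal_coe_nnreal]; exact ENNReal.ofReal_le_ofReal (by simp [C])
  have hc₂ : ENNReal.ofReal C⁻¹ * c₂ ≤ 1 := by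
    rw [← ENNReal.ofReal_coe_nnreal, ← ENNReal.ofReal_mul (by positivity), ← div_eq_inv_mul]
    exact ENNReal.ofReal_le_one.mpr ((div_le_one hC).mpr (by simp [C]))
  refine ⟨C, le_max_left _ _, fun r hr => ⟨?_, (h₁ r hr).trans (by gcongr)⟩⟩
  calc ENNReal.ofReal C⁻¹ * B r ≤ ENNReal.ofReal C⁻¹ * (c₂ * A r) := by gcongr; exact h₂ r hr
    _ = ENNReal.ofReal C⁻¹ * c₂ * A r := (mul_assoc _ _ _).symm
    _ ≤ A r := mul_le_of_le_one_left zero_le hc₂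

end Comparable

section DilationComparison

variable {ι : Type*} [Fintype ι] {β : ι → ℕ}

theorem leUpToConst_setLIntegral_of_dilate_le (hβ : ∀ i, 0 < β i) {U V : Set (ι → ℝ)}
    (hU : Bornology.IsBounded U) (hV : V ∈ 𝓝 0) {Φ : ℝ → (ι → ℝ) → ℝ≥0∞}
    (hΦ : ∀ r, Measurable (Φ r))
    (hdil : ∀ r, 0 < r → ∀ t, 1 ≤ t → ∀ y, Φ r (dilate β t y) ≤ Φ r y) :
    LEUpToConst (fun r => ∫⁻ x in U, Φ r x) (fun r => ∫⁻ x in V, Φ r x) := by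
  obtain ⟨R, hR⟩ := hU.subset_ball 0
  obtain ⟨t, ht, hsub⟩ := exists_preimage_dilate_subset hβ isBounded_ball hV (U := ball 0 R)
  refine ⟨(t ^ ∑ i, β i).toNNReal, fun r hr => ?_⟩
  calc ∫⁻ x in U, Φ r x ≤ ∫⁻ x in ball 0 R, Φ r x := lintegral_mono_set hR
    _ = ENNReal.ofReal (t ^ ∑ i, β i) * ∫⁻ y in dilate β t ⁻¹' ball 0 R, Φ r (dilate β t y) :=
        setLIntegral_eq_mul_setLIntegral_comp_dilate β (by linarith) (hΦ r) measurableSet_ball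
    _ ≤ ENNReal.ofReal (t ^ ∑ i, β i) * ∫⁻ y in dilate β t ⁻¹' ball 0 R, Φ r y := by
        gcongr with y
        exact hdil r hr t ht y
    _ ≤ ENNReal.ofReal (t ^ ∑ i, β i) * ∫⁻ y in V, Φ r y := by
        gcongr

theorem comparable_setLIntegral_of_dilate_le (hβ : ∀ i, 0 < β i) {U V : Set (ι → ℝ)}
    (hU : Bornology.IsBounded U) (hU₀ : U ∈ 𝓝 0) (hV : Bornology.IsBounded V) (hV₀ : V ∈ 𝓝 0)
    {Φ : ℝ → (ι → ℝ) → ℝ≥0∞} (hΦ : ∀ r, Measurable (Φ r))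
    (hdil : ∀ r, 0 < r → ∀ t, 1 ≤ t → ∀ y, Φ r (dilate β t y) ≤ Φ r y) :
    Comparable (fun r => ∫⁻ x in U, Φ r x) (fun r => ∫⁻ x in V, Φ r x) :=
  ⟨leUpToConst_setLIntegral_of_dilate_le hβ hU hV₀ hΦ hdil,
    leUpToConst_setLIntegral_of_dilate_le hβ hV hU₀ hΦ hdil⟩

end DilationComparison

def zeroExtend {ι κ : Type*} [DecidableEq ι] [Fintype κ] (e : κ → ι) (z : κ → ℝ) : ι → ℝ :=
  fun i => ∑ m, if e m = i then z m else 0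

section ZeroExtend

variable {ι κ : Type*} [DecidableEq ι] [Fintype κ] {e : κ → ι}

theorem zeroExtend_apply_of_injective (he : Injective e) (z : κ → ℝ) (m : κ) :
    zeroExtend e z (e m) = z m := by
  rw [zeroExtend, Finset.sum_eq_single m (fun m' _ hm' => if_neg (he.ne hm')) (by simp),
    if_pos rfl]

theorem zeroExtend_dilate (β : ι → ℕ) (t : ℝ) (z : κ → ℝ) :
    zeroExtend e (dilate (β ∘ e) t z) = dilate β t (zeroExtend e z) := by
  funext i
  simp only [zeroExtend, dilate, comp_apply, Finset.mul_sum]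
  refine Finset.sum_congr rfl fun m _ => ?_
  split_ifs with h
  · rw [h]
  · rw [mul_zero]

theorem continuous_zeroExtend (e : κ → ι) : Continuous (zeroExtend e) :=
  continuous_pi fun _ => continuous_finsetSum _ fun _ _ => by
    split_ifs
    exacts [continuous_apply _, continuous_const]

end ZeroExtend

section ZeroExtendComparison

variable {ι κ : Type*} [Fintype ι] [DecidableEq ι] [Fintype κ] {e : κ → ι}

theorem setLIntegral_ball_eq_mul_setLIntegral_ball_zeroExtend (he : Injective e)
    {G : (ι → ℝ) → ℝ≥0∞} (hG : Measurable G)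
    (hdep : ∀ x y, (∀ m, x (e m) = y (e m)) → G x = G y) :
    ∫⁻ x in ball (0 : ι → ℝ) 1, G x =
      volume (ball (0 : ℝ) 1) ^ (Fintype.card ι - Fintype.card κ) *
        ∫⁻ z in ball (0 : κ → ℝ) 1, G (zeroExtend e z) := by
  refine (lintegral_congr fun x => ?_).trans
    (setLIntegral_ball_comp_precomp he (hG.comp (continuous_zeroExtend e).measurable))
  exact hdep _ _ fun m => (zeroExtend_apply_of_injective he (x ∘ e) m).symm

theorem comparable_setLIntegral_zeroExtend {β : ι → ℕ} (hβ : ∀ i, 0 < β i) (he : Injective e)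
    {G : ℝ → (ι → ℝ) → ℝ≥0∞} (hG : ∀ r, Measurable (G r))
    (hdil : ∀ r, 0 < r → ∀ t, 1 ≤ t → ∀ x, G r (dilate β t x) ≤ G r x)
    (hdep : ∀ r x y, (∀ m, x (e m) = y (e m)) → G r x = G r y)
    {U : Set (ι → ℝ)} (hU : Bornology.IsBounded U) (hU₀ : U ∈ 𝓝 0)
    {V : Set (κ → ℝ)} (hV : Bornology.IsBounded V) (hV₀ : V ∈ 𝓝 0) :
    Comparable (fun r => ∫⁻ x in U, G r x) (fun r => ∫⁻ z in V, G r (zeroExtend e z)) := by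
  have hball : Comparable (fun r => ∫⁻ x in ball (0 : ι → ℝ) 1, G r x)
      (fun r => ∫⁻ z in ball (0 : κ → ℝ) 1, G r (zeroExtend e z)) := by
    simp_rw [setLIntegral_ball_eq_mul_setLIntegral_ball_zeroExtend he (hG _) (hdep _)]
    exact Comparable.const_mul (pow_ne_zero _ (measure_ball_pos _ _ one_pos).ne')
      (ENNReal.pow_ne_top measure_ball_lt_top.ne)
  have hdil' (r : ℝ) (hr : 0 < r) (t : ℝ) (ht : 1 ≤ t) (z : κ → ℝ) :
      G r (zeroExtend e (dilate (β ∘ e) t z)) ≤ G r (zeroExtend e z) := by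
    rw [zeroExtend_dilate]
    exact hdil r hr t ht _
  exact (comparable_setLIntegral_of_dilate_le hβ hU hU₀ isBounded_ball (ball_mem_nhds 0 one_pos)
    hG hdil).trans <| hball.trans <|
      comparable_setLIntegral_of_dilate_le (fun m => hβ (e m)) isBounded_ball
        (ball_mem_nhds 0 one_pos) hV hV₀
        (fun r => (hG r).comp (continuous_zeroExtend e).measurable) hdil'

end ZeroExtendComparison

section LamNSW

variable {n w : ℕ} {α : Fin n → ℕ} {f : ℕ → (Fin n → ℝ) → ℝ}

theorem continuous_lamNSW (hf_cont : ∀ k ∈ Finset.Icc w (∑ i, α i), Continuous (f k)) (r : ℝ) :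
    Continuous fun x => LamNSW n w α f x r :=
  continuous_finsetSum _ fun k hk => (hf_cont k hk).mul continuous_const

theorem lamNSW_pos (hwQ : w ≤ ∑ i, α i)
    (hf_nonneg : ∀ k ∈ Finset.Icc w (∑ i, α i), ∀ x, 0 ≤ f k x)
    (hfQ : ∀ x, 0 < f (∑ i, α i) x) (x : Fin n → ℝ) {r : ℝ} (hr : 0 < r) :
    0 < LamNSW n w α f x r :=
  (mul_pos (hfQ x) (pow_pos hr _)).trans_le <|
    Finset.single_le_sum (f := fun k => f k x * r ^ k)
      (fun k hk => mul_nonneg (hf_nonneg k hk x) (pow_nonneg hr.le k))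
      (Finset.mem_Icc.mpr ⟨hwQ, le_rfl⟩)

theorem lamNSW_le_lamNSW_dilate (hf_nonneg : ∀ k ∈ Finset.Icc w (∑ i, α i), ∀ x, 0 ≤ f k x)
    (hf_hom : ∀ k ∈ Finset.Icc w (∑ i, α i), ∀ t : ℝ, 0 < t → ∀ x : Fin n → ℝ,
      f k (fun i => t ^ α i * x i) = t ^ ((∑ i, α i) - k) * f k x)
    {t : ℝ} (ht : 1 ≤ t) (x : Fin n → ℝ) {r : ℝ} (hr : 0 ≤ r) :
    LamNSW n w α f x r ≤ LamNSW n w α f (dilate α t x) r :=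
  Finset.sum_le_sum fun k hk => by
    change f k x * r ^ k ≤ f k (fun i => t ^ α i * x i) * r ^ k
    rw [hf_hom k hk t (by linarith) x]
    gcongr
    exact le_mul_of_one_le_left (hf_nonneg k hk x) (one_le_pow₀ ht)

end LamNSW

theorem stmt2_general (n : ℕ) (α : Fin n → ℕ) (hα : ∀ i, 0 < α i)
    (w : ℕ) (hwQ : w ≤ ∑ i, α i)
    (f : ℕ → (Fin n → ℝ) → ℝ)
    (hf_cont : ∀ k ∈ Finset.Icc w (∑ i, α i), Continuous (f k))
    (hf_nonneg : ∀ k ∈ Finset.Icc w (∑ i, α i), ∀ x, 0 ≤ f k x)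
    (hf_hom : ∀ k ∈ Finset.Icc w (∑ i, α i), ∀ t : ℝ, 0 < t → ∀ x : Fin n → ℝ,
      f k (fun i => t ^ α i * x i) = t ^ ((∑ i, α i) - k) * f k x)
    (hfQ : ∃ cQ : ℝ, 0 < cQ ∧ ∀ x, f (∑ i, α i) x = cQ) :
    (∀ Ω₁ Ω₂ : Set (Fin n → ℝ),
      IsOpen Ω₁ → Bornology.IsBounded Ω₁ → (0 : Fin n → ℝ) ∈ Ω₁ →
      IsOpen Ω₂ → Bornology.IsBounded Ω₂ → (0 : Fin n → ℝ) ∈ Ω₂ →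
      ∃ C : ℝ, 1 ≤ C ∧ ∀ r : ℝ, 0 < r →
        ENNReal.ofReal C⁻¹ * JNSW n w α f Ω₂ r ≤ JNSW n w α f Ω₁ r ∧
        JNSW n w α f Ω₁ r ≤ ENNReal.ofReal C * JNSW n w α f Ω₂ r) ∧
    (∀ v : ℕ, 1 ≤ v → v ≤ n → ∀ e : Fin v → Fin n, StrictMono e →
      (∀ k ∈ Finset.Icc w (∑ i, α i), ∀ x y : Fin n → ℝ,
        (∀ m, x (e m) = y (e m)) → f k x = f k y) →
      ∀ Ω : Set (Fin n → ℝ),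
        IsOpen Ω → Bornology.IsBounded Ω → (0 : Fin n → ℝ) ∈ Ω →
      ∀ Ω' : Set (Fin v → ℝ),
        IsOpen Ω' → Bornology.IsBounded Ω' → (0 : Fin v → ℝ) ∈ Ω' →
      ∃ C : ℝ, 1 ≤ C ∧ ∀ r : ℝ, 0 < r →
        ENNReal.ofReal C⁻¹ *
            (∫⁻ z in Ω', ENNReal.ofReal
              (LamNSW n w α f (fun i => ∑ m, if e m = i then z m else 0) r)⁻¹) ≤
          JNSW n w α f Ω r ∧
        JNSW n w α f Ω r ≤ ENNReal.ofReal C *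
            (∫⁻ z in Ω', ENNReal.ofReal
              (LamNSW n w α f (fun i => ∑ m, if e m = i then z m else 0) r)⁻¹)) := by
  obtain ⟨cQ, hcQ, hfQc⟩ := hfQ
  have hmeas (r : ℝ) : Measurable fun x => ENNReal.ofReal (LamNSW n w α f x r)⁻¹ :=
    ENNReal.measurable_ofReal.comp (continuous_lamNSW hf_cont r).measurable.inv
  have hdil (r : ℝ) (hr : 0 < r) (t : ℝ) (ht : 1 ≤ t) (x : Fin n → ℝ) :
      ENNReal.ofReal (LamNSW n w α f (dilate α t x) r)⁻¹ ≤
        ENNReal.ofReal (LamNSW n w α f x r)⁻¹ :=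
    ENNReal.ofReal_le_ofReal <| inv_anti₀
      (lamNSW_pos hwQ hf_nonneg (fun x => hfQc x ▸ hcQ) x hr)
      (lamNSW_le_lamNSW_dilate hf_nonneg hf_hom ht x hr.le)
  refine ⟨fun Ω₁ Ω₂ h₁ h₁b h₁₀ h₂ h₂b h₂₀ => ?_,
    fun v _ _ e he hdep Ω hΩ hΩb hΩ₀ Ω' hΩ' hΩ'b hΩ'₀ => ?_⟩
  · exact (comparable_setLIntegral_of_dilate_le hα h₁b (h₁.mem_nhds h₁₀) h₂b (h₂.mem_nhds h₂₀)
      hmeas hdil).exists_two_sided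
  · refine (comparable_setLIntegral_zeroExtend hα he.injective hmeas hdil (fun r x y hxy => ?_)
      hΩb (hΩ.mem_nhds hΩ₀) hΩ'b (hΩ'.mem_nhds hΩ'₀)).exists_two_sided
    rw [LamNSW, LamNSW, Finset.sum_congr rfl fun k hk => by rw [hdep k hk x y hxy]]

/-- (i) for any two bounded open sets `Ω₁, Ω₂` containing the origin,
the integrals `∫_{Ω_i} Λ(x,r)⁻¹ dx` are comparable uniformly in `r > 0`; (ii) if moreover
every `f_k` depends only on the coordinates indexed by a set `𝒜 = {i₁ < … < i_v}`, then
`∫_Ω Λ(x,r)⁻¹ dx` is comparable, uniformly in `r > 0`, to the `v`-dimensional integral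
`∫_{Ω'} Λ(ι z, r)⁻¹ dz` for any bounded open `Ω' ⊆ ℝ^v` containing the origin, where
`ι z` has `i_m`-th coordinate `z_m` and the other coordinates `0`. -/
theorem stmt2 (n : ℕ) (α : Fin n → ℕ) (hα : ∀ i, 0 < α i)
    (w : ℕ) (hw : 0 < w) (hwQ : w ≤ ∑ i, α i)
    (f : ℕ → (Fin n → ℝ) → ℝ)
    (hf_cont : ∀ k ∈ Finset.Icc w (∑ i, α i), Continuous (f k))
    (hf_nonneg : ∀ k ∈ Finset.Icc w (∑ i, α i), ∀ x, 0 ≤ f k x)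
    (hf_hom : ∀ k ∈ Finset.Icc w (∑ i, α i), ∀ t : ℝ, 0 < t → ∀ x : Fin n → ℝ,
      f k (fun i => t ^ α i * x i) = t ^ ((∑ i, α i) - k) * f k x)
    (hfQ : ∃ cQ : ℝ, 0 < cQ ∧ ∀ x, f (∑ i, α i) x = cQ) :
    (∀ Ω₁ Ω₂ : Set (Fin n → ℝ),
      IsOpen Ω₁ → Bornology.IsBounded Ω₁ → (0 : Fin n → ℝ) ∈ Ω₁ →
      IsOpen Ω₂ → Bornology.IsBounded Ω₂ → (0 : Fin n → ℝ) ∈ Ω₂ →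
      ∃ C : ℝ, 1 ≤ C ∧ ∀ r : ℝ, 0 < r →
        ENNReal.ofReal C⁻¹ * JNSW n w α f Ω₂ r ≤ JNSW n w α f Ω₁ r ∧
        JNSW n w α f Ω₁ r ≤ ENNReal.ofReal C * JNSW n w α f Ω₂ r) ∧
    (∀ v : ℕ, 1 ≤ v → v ≤ n → ∀ e : Fin v → Fin n, StrictMono e →
      (∀ k ∈ Finset.Icc w (∑ i, α i), ∀ x y : Fin n → ℝ,
        (∀ m, x (e m) = y (e m)) → f k x = f k y) →
      ∀ Ω : Set (Fin n → ℝ),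
        IsOpen Ω → Bornology.IsBounded Ω → (0 : Fin n → ℝ) ∈ Ω →
      ∀ Ω' : Set (Fin v → ℝ),
        IsOpen Ω' → Bornology.IsBounded Ω' → (0 : Fin v → ℝ) ∈ Ω' →
      ∃ C : ℝ, 1 ≤ C ∧ ∀ r : ℝ, 0 < r →
        ENNReal.ofReal C⁻¹ *
            (∫⁻ z in Ω', ENNReal.ofReal
              (LamNSW n w α f (fun i => ∑ m, if e m = i then z m else 0) r)⁻¹) ≤
          JNSW n w α f Ω r ∧
        JNSW n w α f Ω r ≤ ENNReal.ofReal C *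
            (∫⁻ z in Ω', ENNReal.ofReal
              (LamNSW n w α f (fun i => ∑ m, if e m = i then z m else 0) r)⁻¹)) :=
  stmt2_general n α hα w hwQ f hf_cont hf_nonneg hf_hom hfQ
end

section
/- Let n ≥ 1, let 1 ≤ j ≤ n, and let α ≥ 1 and w < Q be positive integers with Q − w ≥ α. For each integer k with w ≤ k ≤ Q let c_k ≥ 0 be a constant, with c_k = 0 whenever (Q−k)/α is not a natural number, and assume c_w > 0 and c_Q > 0. Define Λ(x,r) = Σ_{k=w}^{Q} c_k |x_j|^{(Q−k)/α} r^k for x ∈ ℝⁿ and r > 0, and for a bounded open set Ω ⊆ ℝⁿ containing the origin set J_Ω(r) = ∫_Ω Λ(x,r)⁻¹ dx. Then: if Q − w = α, then J_Ω(r) ≈ r^{−(Q−α)} · ln(1/r) as r → 0⁺; if Q − w > α, then J_Ω(r) ≈ r^{−(Q−α)} as r → 0⁺. -/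
/-!
Each term of `Λ(x, r)` is a weighted geometric mean of the two extreme terms `k = w` and
`k = Q`, because both exponents are affine in `k`. Hence `Λ` is comparable to the model
`|x_j| ^ β r ^ w + r ^ Q` with `β = (Q - w) / α`. The integral of the inverse model over `Ω` lies
between its integrals over two cubes around the origin (closed balls of the sup norm), and by
Fubini and the substitution `x_j = r ^ α s` those equal a constant times
`r ^ (α - Q) ∫₀^{ρ r⁻ᵅ} ds / (s ^ β + 1)`. For `β = 1` this last integral is
`log (ρ r⁻ᵅ + 1) ~ α log (1 / r)`. For `β > 1` it stays between `1 / 2` and `β / (β - 1)`.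
-/

open MeasureTheory Filter Topology Set

lemma rpow_mul_pow_le_add {t r α : ℝ} (ht : 0 ≤ t) (hr : 0 < r) (hα : 0 < α) {w k Q : ℕ}
    (hwk : w ≤ k) (hkQ : k ≤ Q) (hwQ : w < Q) :
    t ^ (((Q : ℝ) - k) / α) * r ^ k ≤ t ^ (((Q : ℝ) - w) / α) * r ^ w + r ^ Q := by
  have hQw : (0 : ℝ) < Q - w := sub_pos.mpr (by exact_mod_cast hwQ)
  have hwk' : (w : ℝ) ≤ k := by exact_mod_cast hwk
  have hkQ' : (k : ℝ) ≤ Q := by exact_mod_cast hkQ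
  set θ : ℝ := (k - w) / (Q - w)
  have hθ0 : 0 ≤ θ := div_nonneg (by linarith) hQw.le
  have hθ1 : θ ≤ 1 := (div_le_one hQw).mpr (by linarith)
  have hA : 0 ≤ t ^ (((Q : ℝ) - w) / α) * r ^ w := by positivity
  have key : t ^ (((Q : ℝ) - k) / α) * r ^ k
      = (t ^ (((Q : ℝ) - w) / α) * r ^ w) ^ (1 - θ) * (r ^ Q) ^ θ := by
    rw [Real.mul_rpow (by positivity) (by positivity), ← Real.rpow_natCast r Q,
      ← Real.rpow_natCast r w, ← Real.rpow_natCast r k, ← Real.rpow_mul ht,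
      ← Real.rpow_mul hr.le, ← Real.rpow_mul hr.le, mul_assoc, ← Real.rpow_add hr]
    congr 2 <;> simp only [θ] <;> field_simp <;> ring
  rw [key]
  calc _ ≤ (1 - θ) * (t ^ (((Q : ℝ) - w) / α) * r ^ w) + θ * r ^ Q :=
        Real.geom_mean_le_arith_mean2_weighted (by linarith) hθ0 hA (by positivity) (by ring)
    _ ≤ _ := by nlinarith [pow_pos hr Q]

-- `Λ(x, r)` of the statement, as a function of `t = |x_j|`
noncomputable def lambdaWeight (c : ℕ → ℝ) (α w Q : ℕ) (t r : ℝ) : ℝ :=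
  ∑ k ∈ Finset.Icc w Q, c k * t ^ (((Q : ℝ) - k) / α) * r ^ k

section lambdaWeight

variable {c : ℕ → ℝ} {α w Q : ℕ} {t r : ℝ}

lemma lambdaWeight_le (hc : ∀ k ∈ Finset.Icc w Q, 0 ≤ c k) (hα : 0 < α) (hwQ : w < Q)
    (ht : 0 ≤ t) (hr : 0 < r) :
    lambdaWeight c α w Q t r ≤
      (∑ k ∈ Finset.Icc w Q, c k) * (t ^ (((Q : ℝ) - w) / α) * r ^ w + r ^ Q) := by
  rw [lambdaWeight, Finset.sum_mul]
  refine Finset.sum_le_sum fun k hk => ?_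
  obtain ⟨hwk, hkQ⟩ := Finset.mem_Icc.mp hk
  rw [mul_assoc]
  exact mul_le_mul_of_nonneg_left
    (rpow_mul_pow_le_add ht hr (by exact_mod_cast hα) hwk hkQ hwQ) (hc k hk)

lemma min_mul_le_lambdaWeight (hc : ∀ k ∈ Finset.Icc w Q, 0 ≤ c k) (hwQ : w < Q)
    (ht : 0 ≤ t) (hr : 0 < r) :
    min (c w) (c Q) * (t ^ (((Q : ℝ) - w) / α) * r ^ w + r ^ Q) ≤ lambdaWeight c α w Q t r := by
  have hpair : ({w, Q} : Finset ℕ) ⊆ Finset.Icc w Q := by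
    simp [Finset.insert_subset_iff, hwQ.le]
  calc _ ≤ c w * t ^ (((Q : ℝ) - w) / α) * r ^ w + c Q * t ^ (((Q : ℝ) - Q) / α) * r ^ Q := by
        rw [sub_self, zero_div, Real.rpow_zero, mul_one, mul_add, ← mul_assoc]
        gcongr
        · exact min_le_left _ _
        · exact min_le_right _ _
    _ = ∑ k ∈ {w, Q}, c k * t ^ (((Q : ℝ) - k) / α) * r ^ k := by rw [Finset.sum_pair hwQ.ne]
    _ ≤ lambdaWeight c α w Q t r :=
        Finset.sum_le_sum_of_subset_of_nonneg hpair fun k hk _ => by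
          have := hc k hk
          positivity

lemma inv_lambdaWeight_bounds (hc : ∀ k ∈ Finset.Icc w Q, 0 ≤ c k) (hcw : 0 < c w)
    (hcQ : 0 < c Q) (hα : 0 < α) (hwQ : w < Q) (ht : 0 ≤ t) (hr : 0 < r) :
    (∑ k ∈ Finset.Icc w Q, c k)⁻¹ * (t ^ (((Q : ℝ) - w) / α) * r ^ w + r ^ Q)⁻¹
        ≤ (lambdaWeight c α w Q t r)⁻¹ ∧
      (lambdaWeight c α w Q t r)⁻¹
        ≤ (min (c w) (c Q))⁻¹ * (t ^ (((Q : ℝ) - w) / α) * r ^ w + r ^ Q)⁻¹ := by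
  have hlo := min_mul_le_lambdaWeight (α := α) hc hwQ ht hr
  have hpos : 0 < lambdaWeight c α w Q t r :=
    (by positivity : 0 < min (c w) (c Q) * _).trans_le hlo
  rw [← mul_inv, ← mul_inv]
  exact ⟨inv_anti₀ hpos (lambdaWeight_le hc hα hwQ ht hr), inv_anti₀ (by positivity) hlo⟩

end lambdaWeight

lemma continuous_inv_abs_rpow_mul_add {β a b : ℝ} (hβ : 0 ≤ β) (ha : 0 < a) (hb : 0 ≤ b) :
    Continuous fun t : ℝ => (|t| ^ β * b + a)⁻¹ :=
  ((continuous_abs.rpow_const fun _ => Or.inr hβ).mul continuous_const |>.add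
    continuous_const).inv₀ fun t =>
    (add_pos_of_nonneg_of_pos (mul_nonneg (Real.rpow_nonneg (abs_nonneg t) β) hb) ha).ne'

lemma integral_closedBall_zero_comp_eval {ι : Type*} [Fintype ι] (j : ι) {ρ : ℝ} (hρ : 0 ≤ ρ)
    {g : ℝ → ℝ} (hg : Measurable g) :
    ∫ x in Metric.closedBall (0 : ι → ℝ) ρ, g (x j)
      = (2 * ρ) ^ (Fintype.card ι - 1) * ∫ t in -ρ..ρ, g t := by
  classical
  rw [closedBall_pi _ hρ, volume_pi, Measure.restrict_pi_pi,
    ← integral_map (measurable_pi_apply j).aemeasurable hg.aestronglyMeasurable,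
    Measure.pi_map_eval, integral_smul_measure]
  simp only [Pi.zero_apply, Real.closedBall_eq_Icc, zero_sub, zero_add,
    Measure.restrict_apply_univ, Real.volume_Icc, sub_neg_eq_add, Finset.prod_const,
    Finset.card_erase_of_mem (Finset.mem_univ j), Finset.card_univ, ENNReal.toReal_pow,
    smul_eq_mul]
  rw [ENNReal.toReal_ofReal (by linarith), intervalIntegral.integral_of_le (by linarith),
    integral_Icc_eq_integral_Ioc, two_mul]

lemma intervalIntegral.integral_neg_self_of_even {g : ℝ → ℝ} (hg : Function.Even g) {ρ : ℝ}
    (hint : IntervalIntegrable g volume 0 ρ) :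
    ∫ t in -ρ..ρ, g t = 2 * ∫ t in 0..ρ, g t := by
  have hg : ∀ t, g (-t) = g t := hg
  have hneg : ∫ t in -ρ..0, g t = ∫ t in 0..ρ, g t := by
    simpa [hg] using (intervalIntegral.integral_comp_neg (a := 0) (b := ρ) g).symm
  rw [← intervalIntegral.integral_add_adjacent_intervals (b := 0) _ hint, hneg, two_mul]
  simpa [hg] using (IntervalIntegrable.iff_comp_neg (f := g)).mp hint.symm

lemma integral_inv_abs_rpow_mul_add {β a b l ρ : ℝ} (hl : 0 < l) (hlab : l ^ β * b = a) :
    ∫ t in (0 : ℝ)..ρ, (|t| ^ β * b + a)⁻¹ = l / a * ∫ s in (0 : ℝ)..ρ / l, (|s| ^ β + 1)⁻¹ := by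
  have hscale : ∀ t : ℝ, (|t| ^ β * b + a)⁻¹ = a⁻¹ * (|l⁻¹ * t| ^ β + 1)⁻¹ := by
    intro t
    rw [abs_mul, abs_of_pos (inv_pos.mpr hl), Real.mul_rpow (inv_pos.mpr hl).le (abs_nonneg t),
      Real.inv_rpow hl.le, ← hlab]
    have : 0 < l ^ β := Real.rpow_pos_of_pos hl β
    field_simp
  simp_rw [hscale]
  rw [intervalIntegral.integral_const_mul, intervalIntegral.integral_comp_mul_left
    (fun s => (|s| ^ β + 1)⁻¹) (inv_ne_zero hl.ne'), mul_zero, inv_inv, smul_eq_mul,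
    inv_mul_eq_div, div_eq_inv_mul ρ]
  ring

lemma integral_closedBall_inv_abs_rpow_mul_add {ι : Type*} [Fintype ι] (j : ι)
    {β a b l ρ : ℝ} (hβ : 0 ≤ β) (ha : 0 < a) (hb : 0 ≤ b) (hl : 0 < l) (hlab : l ^ β * b = a)
    (hρ : 0 ≤ ρ) :
    ∫ x in Metric.closedBall (0 : ι → ℝ) ρ, (|x j| ^ β * b + a)⁻¹
      = (2 * ρ) ^ (Fintype.card ι - 1) *
          (2 * (l / a * ∫ s in (0 : ℝ)..ρ / l, (|s| ^ β + 1)⁻¹)) := by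
  have hcont := continuous_inv_abs_rpow_mul_add hβ ha hb
  rw [integral_closedBall_zero_comp_eval j hρ hcont.measurable,
    intervalIntegral.integral_neg_self_of_even (fun t => by rw [abs_neg])
      (hcont.intervalIntegrable _ _),
    integral_inv_abs_rpow_mul_add hl hlab]

lemma integral_inv_abs_add_one {T : ℝ} (hT : 0 ≤ T) :
    ∫ s in (0 : ℝ)..T, (|s| ^ (1 : ℝ) + 1)⁻¹ = Real.log (T + 1) := by
  rw [intervalIntegral.integral_congr (g := fun s => (s + 1)⁻¹) fun s hs => by
      rw [uIcc_of_le hT] at hs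
      simp [abs_of_nonneg hs.1],
    intervalIntegral.integral_comp_add_right (fun s => s⁻¹), integral_inv (by
      rw [uIcc_of_le (by linarith)]; exact fun h => by linarith [h.1]), zero_add, div_one]

lemma one_half_le_integral_inv_abs_rpow_add_one {β T : ℝ} (hβ : 0 ≤ β) (hT : 1 ≤ T) :
    1 / 2 ≤ ∫ s in (0 : ℝ)..T, (|s| ^ β + 1)⁻¹ := by
  have hcont := continuous_inv_abs_rpow_mul_add (β := β) hβ one_pos zero_le_one
  simp only [mul_one] at hcont
  calc (1 : ℝ) / 2 = ∫ _ in (0 : ℝ)..1, (2 : ℝ)⁻¹ := by simp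
    _ ≤ ∫ s in (0 : ℝ)..1, (|s| ^ β + 1)⁻¹ := by
        refine intervalIntegral.integral_mono_on zero_le_one intervalIntegrable_const
          (hcont.intervalIntegrable _ _) fun s hs => ?_
        have : |s| ^ β ≤ 1 := Real.rpow_le_one (abs_nonneg s)
          (abs_le.mpr ⟨by linarith [hs.1], hs.2⟩) hβ
        gcongr
        linarith
    _ ≤ ∫ s in (0 : ℝ)..T, (|s| ^ β + 1)⁻¹ :=
        intervalIntegral.integral_mono_interval le_rfl zero_le_one hT
          (Eventually.of_forall fun s => by positivity) (hcont.intervalIntegrable _ _)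

lemma integral_inv_abs_rpow_add_one_le {β T : ℝ} (hβ : 1 < β) (hT : 1 ≤ T) :
    ∫ s in (0 : ℝ)..T, (|s| ^ β + 1)⁻¹ ≤ β / (β - 1) := by
  have hcont := continuous_inv_abs_rpow_mul_add (β := β) (by linarith) one_pos zero_le_one
  simp only [mul_one] at hcont
  have hhead : ∫ s in (0 : ℝ)..1, (|s| ^ β + 1)⁻¹ ≤ 1 := by
    calc _ ≤ ∫ _ in (0 : ℝ)..1, (1 : ℝ) :=
          intervalIntegral.integral_mono_on zero_le_one (hcont.intervalIntegrable _ _)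
            intervalIntegrable_const fun s _ => inv_le_one_of_one_le₀ (by
              have := Real.rpow_nonneg (abs_nonneg s) β
              linarith)
      _ = 1 := by simp
  have htail : ∫ s in (1 : ℝ)..T, (|s| ^ β + 1)⁻¹ ≤ 1 / (β - 1) := by
    have hpos : ∀ s ∈ uIcc 1 T, 0 < s := fun s hs => by
      rw [uIcc_of_le hT] at hs; linarith [hs.1]
    calc _ ≤ ∫ s in (1 : ℝ)..T, s ^ (-β) := by
          refine intervalIntegral.integral_mono_on hT (hcont.intervalIntegrable _ _)
            (ContinuousOn.intervalIntegrable fun s hs =>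
              (Real.continuousAt_rpow_const s (-β) (Or.inl (hpos s hs).ne')).continuousWithinAt)
            fun s hs => ?_
          have hs0 : 0 < s := hpos s (by rwa [uIcc_of_le hT])
          rw [abs_of_pos hs0, Real.rpow_neg hs0.le]
          gcongr
          linarith
      _ = (1 - T ^ (1 - β)) / (β - 1) := by
          rw [integral_rpow (Or.inr ⟨by linarith, fun h => by linarith [hpos 0 h]⟩),
            Real.one_rpow]
          rw [show -β + 1 = 1 - β by ring, div_eq_div_iff (by linarith) (by linarith)]
          ring
      _ ≤ 1 / (β - 1) :=
          div_le_div_of_nonneg_right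
            (by linarith [Real.rpow_nonneg (zero_le_one.trans hT) (1 - β)]) (by linarith)
  rw [← intervalIntegral.integral_add_adjacent_intervals (hcont.intervalIntegrable 0 1)
    (hcont.intervalIntegrable 1 T)]
  calc _ ≤ 1 + 1 / (β - 1) := add_le_add hhead htail
    _ = β / (β - 1) := by field_simp [(by linarith : β - 1 ≠ 0)]; ring

lemma exists_closedBall_subset_subset_closedBall {X : Type*} [PseudoMetricSpace X] {Ω : Set X}
    {x : X} (hΩo : IsOpen Ω) (hΩb : Bornology.IsBounded Ω) (hx : x ∈ Ω) :
    ∃ δ M : ℝ, 0 < δ ∧ δ ≤ M ∧ Metric.closedBall x δ ⊆ Ω ∧ Ω ⊆ Metric.closedBall x M := by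
  obtain ⟨ε, hε, hball⟩ := Metric.isOpen_iff.mp hΩo x hx
  obtain ⟨R, hR⟩ := hΩb.subset_closedBall x
  exact ⟨ε / 2, max R (ε / 2), half_pos hε, le_max_right _ _,
    (Metric.closedBall_subset_ball (half_lt_self hε)).trans hball,
    hR.trans (Metric.closedBall_subset_closedBall (le_max_left _ _))⟩

lemma mul_setIntegral_le_setIntegral_le_mul_setIntegral {X : Type*} [MeasurableSpace X]
    {μ : Measure X} {s t u : Set X} (hst : s ⊆ t) (htu : t ⊆ u) {f g : X → ℝ} {a b : ℝ}
    (ha : 0 ≤ a) (hb : 0 ≤ b)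
    (hg : IntegrableOn g u μ) (hg0 : ∀ x, 0 ≤ g x) (hf : AEStronglyMeasurable f μ)
    (hfg : ∀ x, a * g x ≤ f x ∧ f x ≤ b * g x) :
    a * ∫ x in s, g x ∂μ ≤ ∫ x in t, f x ∂μ ∧ ∫ x in t, f x ∂μ ≤ b * ∫ x in u, g x ∂μ := by
  have hgt : IntegrableOn g t μ := hg.mono_set htu
  have hft : IntegrableOn f t μ := (hgt.const_mul b).mono' hf.restrict
    (Eventually.of_forall fun x => by
      rw [Real.norm_eq_abs, abs_of_nonneg ((mul_nonneg ha (hg0 x)).trans (hfg x).1)]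
      exact (hfg x).2)
  rw [← integral_const_mul, ← integral_const_mul]
  refine ⟨?_, ?_⟩
  · calc ∫ x in s, a * g x ∂μ ≤ ∫ x in t, a * g x ∂μ :=
          setIntegral_mono_set (hgt.const_mul a)
            (Eventually.of_forall fun x => mul_nonneg ha (hg0 x)) hst.eventuallyLE
      _ ≤ ∫ x in t, f x ∂μ := setIntegral_mono (hgt.const_mul a) hft fun x => (hfg x).1
  · calc ∫ x in t, f x ∂μ ≤ ∫ x in t, b * g x ∂μ :=
          setIntegral_mono hft (hgt.const_mul b) fun x => (hfg x).2
      _ ≤ ∫ x in u, b * g x ∂μ :=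
          setIntegral_mono_set (hg.const_mul b)
            (Eventually.of_forall fun x => mul_nonneg hb (hg0 x)) htu.eventuallyLE

theorem exists_bounds_integral_inv_lambdaWeight {ι : Type*} [Fintype ι] (j : ι) {α w Q : ℕ}
    (hα : 0 < α) (hwQ : w < Q) {c : ℕ → ℝ} (hc : ∀ k ∈ Finset.Icc w Q, 0 ≤ c k)
    (hcw : 0 < c w) (hcQ : 0 < c Q) {Ω : Set (ι → ℝ)} (hΩo : IsOpen Ω)
    (hΩb : Bornology.IsBounded Ω) (hΩ0 : 0 ∈ Ω) :
    ∃ c₁ c₂ δ M : ℝ, 0 < c₁ ∧ 0 ≤ c₂ ∧ 0 < δ ∧ 0 < M ∧ ∀ r, 0 < r →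
      c₁ * (r ^ α / r ^ Q * ∫ s in (0 : ℝ)..δ / r ^ α, (|s| ^ (((Q : ℝ) - w) / α) + 1)⁻¹)
          ≤ ∫ x in Ω, (lambdaWeight c α w Q |x j| r)⁻¹ ∧
        ∫ x in Ω, (lambdaWeight c α w Q |x j| r)⁻¹
          ≤ c₂ * (r ^ α / r ^ Q *
              ∫ s in (0 : ℝ)..M / r ^ α, (|s| ^ (((Q : ℝ) - w) / α) + 1)⁻¹) := by
  obtain ⟨δ, M, hδ, hδM, hδΩ, hΩM⟩ := exists_closedBall_subset_subset_closedBall hΩo hΩb hΩ0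
  have hM : 0 < M := hδ.trans_le hδM
  set β : ℝ := ((Q : ℝ) - w) / α
  have hβ : 0 ≤ β := div_nonneg (sub_nonneg.mpr (by exact_mod_cast hwQ.le)) (Nat.cast_nonneg α)
  set S := ∑ k ∈ Finset.Icc w Q, c k
  have hS : 0 < S := hcw.trans_le (Finset.single_le_sum hc (by simp [hwQ.le]))
  refine ⟨S⁻¹ * ((2 * δ) ^ (Fintype.card ι - 1) * 2), (min (c w) (c Q))⁻¹ *
    ((2 * M) ^ (Fintype.card ι - 1) * 2), δ, M, by positivity, by positivity, hδ, hM,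
    fun r hr => ?_⟩
  -- `t = r ^ α` is the scale at which the two extreme terms of `Λ` balance
  have hscale : (r ^ α) ^ β * r ^ w = r ^ Q := by
    rw [← Real.rpow_natCast r α, ← Real.rpow_mul hr.le,
      mul_div_cancel₀ _ (by exact_mod_cast hα.ne' : (α : ℝ) ≠ 0), ← Real.rpow_natCast r w,
      ← Real.rpow_add hr, sub_add_cancel, Real.rpow_natCast]
  have hmodel := fun ρ (hρ : 0 ≤ ρ) => integral_closedBall_inv_abs_rpow_mul_add j hβ
    (pow_pos hr Q) (pow_pos hr w).le (pow_pos hr α) hscale hρ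
  have hG : Continuous fun x : ι → ℝ => (|x j| ^ β * r ^ w + r ^ Q)⁻¹ :=
    (continuous_inv_abs_rpow_mul_add hβ (pow_pos hr Q) (pow_pos hr w).le).comp
      (continuous_apply j)
  have hΛ : Measurable fun x : ι → ℝ => (lambdaWeight c α w Q |x j| r)⁻¹ := by
    unfold lambdaWeight
    fun_prop
  have hbounds := mul_setIntegral_le_setIntegral_le_mul_setIntegral (μ := volume) hδΩ hΩM
    (by positivity) (by positivity)
    (hG.continuousOn.integrableOn_compact (isCompact_closedBall 0 M))
    (fun x => by positivity) hΛ.aestronglyMeasurable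
    fun x => inv_lambdaWeight_bounds hc hcw hcQ hα hwQ (abs_nonneg (x j)) hr
  rw [hmodel δ hδ.le, hmodel M hM.le] at hbounds
  constructor
  · convert hbounds.1 using 1; ring
  · convert hbounds.2 using 1; ring

-- `F(r) ≈ G(r)` as `r → 0⁺`
def IsComparableNearZero (F G : ℝ → ℝ) : Prop :=
  ∃ C : ℝ, 1 ≤ C ∧ ∃ r₀ : ℝ, 0 < r₀ ∧ r₀ < 1 ∧ ∀ r : ℝ, 0 < r → r < r₀ →
    C⁻¹ * G r ≤ F r ∧ F r ≤ C * G r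

lemma isComparableNearZero_of_eventually {F G : ℝ → ℝ} {a b : ℝ} (ha : 0 < a)
    (h : ∀ᶠ r in 𝓝[>] 0, 0 ≤ G r ∧ a * G r ≤ F r ∧ F r ≤ b * G r) :
    IsComparableNearZero F G := by
  obtain ⟨ε, hε, hball⟩ := Metric.eventually_nhds_iff.mp (eventually_nhdsWithin_iff.mp h)
  set C := max 1 (max b a⁻¹)
  have hC : 0 < C := lt_of_lt_of_le one_pos (le_max_left _ _)
  have hCa : C⁻¹ ≤ a := (inv_le_comm₀ hC ha).mpr ((le_max_right _ _).trans (le_max_right _ _))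
  have hbC : b ≤ C := (le_max_left _ _).trans (le_max_right _ _)
  refine ⟨C, le_max_left _ _, min ε (1 / 2), lt_min hε (by norm_num),
    (min_le_right _ _).trans_lt (by norm_num), fun r hr hrr₀ => ?_⟩
  have hdist : dist r 0 < ε := by
    rw [Real.dist_0_eq_abs, abs_of_pos hr]
    exact hrr₀.trans_le (min_le_left _ _)
  obtain ⟨hG, hlo, hup⟩ := hball hdist hr
  exact ⟨(mul_le_mul_of_nonneg_right hCa hG).trans hlo,
    hup.trans (mul_le_mul_of_nonneg_right hbC hG)⟩

lemma tendsto_log_div_pow_add_one_div_log_inv {ρ : ℝ} (hρ : 0 < ρ) {α : ℕ} (hα : 0 < α) :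
    Tendsto (fun r => Real.log (ρ / r ^ α + 1) / Real.log (1 / r)) (𝓝[>] 0) (𝓝 α) := by
  have hlog : Tendsto (fun r => Real.log (1 / r)) (𝓝[>] 0) atTop := by
    simpa [one_div, Real.log_inv] using Real.tendsto_log_nhdsGT_zero
  have hnum : Tendsto (fun r : ℝ => Real.log (ρ + r ^ α)) (𝓝[>] 0) (𝓝 (Real.log ρ)) := by
    have : Tendsto (fun r : ℝ => ρ + r ^ α) (𝓝 0) (𝓝 ρ) :=
      (by fun_prop : Continuous fun r : ℝ => ρ + r ^ α).tendsto' 0 ρ (by simp [hα.ne'])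
    exact (this.log hρ.ne').mono_left nhdsWithin_le_nhds
  have hsplit : ∀ᶠ r in 𝓝[>] (0 : ℝ), Real.log (ρ + r ^ α) / Real.log (1 / r) + α
      = Real.log (ρ / r ^ α + 1) / Real.log (1 / r) := by
    filter_upwards [self_mem_nhdsWithin, hlog.eventually_gt_atTop 0] with r hr hL
    have hrα : 0 < r ^ α := pow_pos hr α
    rw [div_add_one hrα.ne', Real.log_div (by positivity) hrα.ne', Real.log_pow,
      show Real.log r = -Real.log (1 / r) by rw [one_div, Real.log_inv, neg_neg]]
    field_simp
    ring
  simpa using ((hnum.div_atTop hlog).add_const (α : ℝ)).congr' hsplit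

lemma eventually_one_le_div_pow {ρ : ℝ} (hρ : 0 < ρ) {α : ℕ} (hα : α ≠ 0) :
    ∀ᶠ r in 𝓝[>] (0 : ℝ), 1 ≤ ρ / r ^ α := by
  filter_upwards [Ioo_mem_nhdsGT (lt_min hρ one_pos)] with r ⟨hr, hrρ⟩
  rw [one_le_div (pow_pos hr α)]
  calc r ^ α ≤ r := pow_le_of_le_one hr.le (hrρ.trans_le (min_le_right _ _)).le hα
    _ ≤ ρ := (hrρ.trans_le (min_le_left _ _)).le

lemma isComparableNearZero_log_div_pow_of_bounds {J : ℝ → ℝ} {α Q : ℕ} (hα : α ≠ 0)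
    (hαQ : α ≤ Q) {c₁ c₂ δ M : ℝ} (hc₁ : 0 < c₁) (hc₂ : 0 ≤ c₂) (hδ : 0 < δ) (hM : 0 < M)
    (hJ : ∀ r, 0 < r →
      c₁ * (r ^ α / r ^ Q * ∫ s in (0 : ℝ)..δ / r ^ α, (|s| ^ (1 : ℝ) + 1)⁻¹) ≤ J r ∧
      J r ≤ c₂ * (r ^ α / r ^ Q * ∫ s in (0 : ℝ)..M / r ^ α, (|s| ^ (1 : ℝ) + 1)⁻¹)) :
    IsComparableNearZero J fun r => Real.log (1 / r) / r ^ (Q - α) := by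
  have hα' : (0 : ℝ) < α := by exact_mod_cast Nat.pos_of_ne_zero hα
  refine isComparableNearZero_of_eventually (a := c₁ * (α / 2)) (b := c₂ * (2 * α))
    (by positivity) ?_
  filter_upwards [Ioo_mem_nhdsGT one_pos,
    (tendsto_order.mp (tendsto_log_div_pow_add_one_div_log_inv hδ (Nat.pos_of_ne_zero hα))).1
      (α / 2) (by linarith),
    (tendsto_order.mp (tendsto_log_div_pow_add_one_div_log_inv hM (Nat.pos_of_ne_zero hα))).2
      (2 * α) (by linarith)] with r ⟨hr, hr1⟩ hδr hMr
  have hL : 0 < Real.log (1 / r) := Real.log_pos (one_lt_one_div hr hr1)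
  rw [lt_div_iff₀ hL] at hδr
  rw [div_lt_iff₀ hL] at hMr
  have hG : Real.log (1 / r) / r ^ (Q - α) = r ^ α / r ^ Q * Real.log (1 / r) := by
    rw [pow_sub₀ _ hr.ne' hαQ]
    field_simp
  have hP : 0 < r ^ α / r ^ Q := by positivity
  obtain ⟨hlo, hup⟩ := hJ r hr
  rw [integral_inv_abs_add_one (by positivity)] at hlo hup
  rw [hG]
  refine ⟨by positivity, ?_, ?_⟩
  · calc c₁ * (α / 2) * (r ^ α / r ^ Q * Real.log (1 / r))
        = c₁ * (r ^ α / r ^ Q * (α / 2 * Real.log (1 / r))) := by ring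
      _ ≤ c₁ * (r ^ α / r ^ Q * Real.log (δ / r ^ α + 1)) := by gcongr
      _ ≤ J r := hlo
  · calc J r ≤ c₂ * (r ^ α / r ^ Q * Real.log (M / r ^ α + 1)) := hup
      _ ≤ c₂ * (r ^ α / r ^ Q * (2 * α * Real.log (1 / r))) := by gcongr
      _ = _ := by ring

lemma isComparableNearZero_one_div_pow_of_bounds {J : ℝ → ℝ} {α Q : ℕ} (hα : α ≠ 0)
    (hαQ : α ≤ Q) {β c₁ c₂ δ M : ℝ} (hβ : 1 < β) (hc₁ : 0 < c₁) (hc₂ : 0 ≤ c₂) (hδ : 0 < δ)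
    (hM : 0 < M)
    (hJ : ∀ r, 0 < r →
      c₁ * (r ^ α / r ^ Q * ∫ s in (0 : ℝ)..δ / r ^ α, (|s| ^ β + 1)⁻¹) ≤ J r ∧
      J r ≤ c₂ * (r ^ α / r ^ Q * ∫ s in (0 : ℝ)..M / r ^ α, (|s| ^ β + 1)⁻¹)) :
    IsComparableNearZero J fun r => 1 / r ^ (Q - α) := by
  refine isComparableNearZero_of_eventually (a := c₁ / 2) (b := c₂ * (β / (β - 1)))
    (by positivity) ?_
  filter_upwards [self_mem_nhdsWithin, eventually_one_le_div_pow hδ hα,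
    eventually_one_le_div_pow hM hα] with r (hr : 0 < r) hδr hMr
  rw [pow_sub₀ _ hr.ne' hαQ, ← div_eq_mul_inv, one_div_div]
  have hP : 0 ≤ r ^ α / r ^ Q := by positivity
  obtain ⟨hlo, hup⟩ := hJ r hr
  refine ⟨hP, ?_, ?_⟩
  · calc c₁ / 2 * (r ^ α / r ^ Q) = c₁ * (r ^ α / r ^ Q * (1 / 2)) := by ring
      _ ≤ _ := by
        gcongr
        exact one_half_le_integral_inv_abs_rpow_add_one (by linarith) hδr
      _ ≤ J r := hlo
  · calc J r ≤ _ := hup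
      _ ≤ c₂ * (r ^ α / r ^ Q * (β / (β - 1))) := by
        gcongr
        exact integral_inv_abs_rpow_add_one_le hβ hMr
      _ = _ := by ring

theorem stmt3_general (n : ℕ) (j : Fin n) (α w Q : ℕ)
    (hα : 1 ≤ α) (hwQ : w < Q)
    (c : ℕ → ℝ)
    (hc_nonneg : ∀ k ∈ Finset.Icc w Q, 0 ≤ c k)
    (hcw : 0 < c w) (hcQ : 0 < c Q)
    (Ω : Set (Fin n → ℝ)) (hΩo : IsOpen Ω) (hΩb : Bornology.IsBounded Ω)
    (hΩ0 : (0 : Fin n → ℝ) ∈ Ω) :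
    (Q - w = α →
      ∃ C : ℝ, 1 ≤ C ∧ ∃ r₀ : ℝ, 0 < r₀ ∧ r₀ < 1 ∧ ∀ r : ℝ, 0 < r → r < r₀ →
        C⁻¹ * (Real.log (1/r) / r ^ (Q - α)) ≤
          (∫ x in Ω, (∑ k ∈ Finset.Icc w Q,
            c k * |x j| ^ (((Q : ℝ) - k) / α) * r ^ k)⁻¹) ∧
        (∫ x in Ω, (∑ k ∈ Finset.Icc w Q,
            c k * |x j| ^ (((Q : ℝ) - k) / α) * r ^ k)⁻¹) ≤
          C * (Real.log (1/r) / r ^ (Q - α))) ∧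
    (α < Q - w →
      ∃ C : ℝ, 1 ≤ C ∧ ∃ r₀ : ℝ, 0 < r₀ ∧ r₀ < 1 ∧ ∀ r : ℝ, 0 < r → r < r₀ →
        C⁻¹ * (1 / r ^ (Q - α)) ≤
          (∫ x in Ω, (∑ k ∈ Finset.Icc w Q,
            c k * |x j| ^ (((Q : ℝ) - k) / α) * r ^ k)⁻¹) ∧
        (∫ x in Ω, (∑ k ∈ Finset.Icc w Q,
            c k * |x j| ^ (((Q : ℝ) - k) / α) * r ^ k)⁻¹) ≤
          C * (1 / r ^ (Q - α))) := by
  obtain ⟨c₁, c₂, δ, M, hc₁, hc₂, hδ, hM, hJ⟩ :=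
    exists_bounds_integral_inv_lambdaWeight j hα hwQ hc_nonneg hcw hcQ hΩo hΩb hΩ0
  have hQw : ((Q - w : ℕ) : ℝ) = Q - w := Nat.cast_sub hwQ.le
  refine ⟨fun hlog => ?_, fun hpow => ?_⟩
  · have hβ : ((Q : ℝ) - w) / α = 1 := by
      rw [div_eq_one_iff_eq (by positivity), ← hQw, hlog]
    simp only [hβ] at hJ
    exact isComparableNearZero_log_div_pow_of_bounds (by omega) (by omega) hc₁ hc₂ hδ hM hJ
  · have hβ : 1 < ((Q : ℝ) - w) / α := by
      rw [one_lt_div (by positivity), ← hQw]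
      exact_mod_cast hpow
    exact isComparableNearZero_one_div_pow_of_bounds (by omega) (by omega) hβ hc₁ hc₂ hδ hM hJ

/-- For `Λ(x,r) = Σ_{k=w}^{Q} c_k |x_j|^{(Q−k)/α} r^k` with `c_k = 0` whenever
`(Q−k)/α ∉ ℕ`, `c_w, c_Q > 0`, and `J_Ω(r) = ∫_Ω Λ(x,r)⁻¹ dx` over a bounded open set `Ω`
containing the origin: if `Q − w = α` then `J_Ω(r) ≈ r^{−(Q−α)} ln(1/r)` as `r → 0⁺`, and if
`Q − w > α` then `J_Ω(r) ≈ r^{−(Q−α)}` as `r → 0⁺`. -/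
theorem stmt3 (n : ℕ) (hn : 1 ≤ n) (j : Fin n) (α w Q : ℕ)
    (hα : 1 ≤ α) (hw : 0 < w) (hwQ : w < Q) (hαQw : α ≤ Q - w)
    (c : ℕ → ℝ)
    (hc_nonneg : ∀ k ∈ Finset.Icc w Q, 0 ≤ c k)
    (hc_zero : ∀ k ∈ Finset.Icc w Q, ¬ (α ∣ (Q - k)) → c k = 0)
    (hcw : 0 < c w) (hcQ : 0 < c Q)
    (Ω : Set (Fin n → ℝ)) (hΩo : IsOpen Ω) (hΩb : Bornology.IsBounded Ω)
    (hΩ0 : (0 : Fin n → ℝ) ∈ Ω) :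
    (Q - w = α →
      ∃ C : ℝ, 1 ≤ C ∧ ∃ r₀ : ℝ, 0 < r₀ ∧ r₀ < 1 ∧ ∀ r : ℝ, 0 < r → r < r₀ →
        C⁻¹ * (Real.log (1/r) / r ^ (Q - α)) ≤
          (∫ x in Ω, (∑ k ∈ Finset.Icc w Q,
            c k * |x j| ^ (((Q : ℝ) - k) / α) * r ^ k)⁻¹) ∧
        (∫ x in Ω, (∑ k ∈ Finset.Icc w Q,
            c k * |x j| ^ (((Q : ℝ) - k) / α) * r ^ k)⁻¹) ≤
          C * (Real.log (1/r) / r ^ (Q - α))) ∧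
    (α < Q - w →
      ∃ C : ℝ, 1 ≤ C ∧ ∃ r₀ : ℝ, 0 < r₀ ∧ r₀ < 1 ∧ ∀ r : ℝ, 0 < r → r < r₀ →
        C⁻¹ * (1 / r ^ (Q - α)) ≤
          (∫ x in Ω, (∑ k ∈ Finset.Icc w Q,
            c k * |x j| ^ (((Q : ℝ) - k) / α) * r ^ k)⁻¹) ∧
        (∫ x in Ω, (∑ k ∈ Finset.Icc w Q,
            c k * |x j| ^ (((Q : ℝ) - k) / α) * r ^ k)⁻¹) ≤
          C * (1 / r ^ (Q - α))) :=
  stmt3_general n j α w Q hα hwQ c hc_nonneg hcw hcQ Ω hΩo hΩb hΩ0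
end

section
/- Assume (A). Then there exists a constant C ∈ (0,1), depending only on 𝔊, such that for all r ∈ (0,1): C · Σ_{(a,s)∈𝔊°} J_{a,s}(r) ≤ I(r) ≤ Σ_{(a,s)∈𝔊°} J_{a,s}(r). -/
open MeasureTheory
open scoped ENNReal Classical

/-- `I(r) = ∫_{(0,1]^N} x^b / (Σ_{(a,s)∈𝔊} x^a r^s) dx`, with values in `[0,∞]`. -/
noncomputable def Ifun (N : ℕ) (G : Finset ((Fin N → ℕ) × ℝ)) (b : Fin N → ℕ)
    (r : ℝ) : ℝ≥0∞ :=
  ∫⁻ x in Set.univ.pi (fun _ : Fin N => Set.Ioc (0 : ℝ) 1),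
    ENNReal.ofReal ((∏ i, x i ^ b i) / ∑ p ∈ G, (∏ i, x i ^ p.1 i) * r ^ p.2)

/-- The polyhedron `P_{a,s} = {y ∈ [0,∞)^N : ⟨a − a′, y⟩ ≤ s′ − s for all (a′,s′) ∈ 𝔊}`. -/
def Pset (N : ℕ) (G : Finset ((Fin N → ℕ) × ℝ)) (a : Fin N → ℕ) (s : ℝ) :
    Set (Fin N → ℝ) :=
  {y | (∀ i, 0 ≤ y i) ∧ ∀ p ∈ G, ∑ i, ((a i : ℝ) - (p.1 i : ℝ)) * y i ≤ p.2 - s}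

/-- The linear function `φ_a(y) = ⟨a − b − 𝟏, y⟩`. -/
def phiFun (N : ℕ) (a b : Fin N → ℕ) (y : Fin N → ℝ) : ℝ :=
  ∑ i, ((a i : ℝ) - (b i : ℝ) - 1) * y i

/-- `J_{a,s}(r) = (ln(1/r))^N · r^{−s} · ∫_{P_{a,s}} e^{(ln(1/r)) φ_a(y)} dy`. -/
noncomputable def Jfun (N : ℕ) (G : Finset ((Fin N → ℕ) × ℝ)) (b : Fin N → ℕ)
    (a : Fin N → ℕ) (s : ℝ) (r : ℝ) : ℝ≥0∞ :=
  ENNReal.ofReal ((Real.log (1/r)) ^ N / r ^ s) *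
    ∫⁻ y in Pset N G a s, ENNReal.ofReal (Real.exp (Real.log (1/r) * phiFun N a b y))

/-- `𝔊° = {(a,s) ∈ 𝔊 : P_{a,s} has positive N-dimensional Lebesgue measure}`. -/
noncomputable def Gcirc (N : ℕ) (G : Finset ((Fin N → ℕ) × ℝ)) :
    Finset ((Fin N → ℕ) × ℝ) :=
  G.filter (fun p => 0 < volume (Pset N G p.1 p.2))

/-
Substituting `x_i = r^{y_i}` turns `I(r)` into an integral over the orthant `[0,∞)^N` whose
denominator is `Σ_q r^{⟨a_q, y⟩ + s_q}`. The polyhedron `P_{a,s}` is the region where the term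
`(a,s)` has the smallest exponent, i.e. dominates the denominator: these regions cover the orthant
and overlap only in hyperplanes, and those outside `𝔊°` are null. On `P_{a,s}` the denominator lies
between its dominant term and `|𝔊|` times it, and keeping only the dominant term gives `J_{a,s}(r)`.
Hence `I ≤ Σ J ≤ |𝔊| I`, and `C = 1 / (|𝔊| + 1)` works.
-/

open Set Real

lemma volume_setOf_sum_mul_eq {ι : Type*} [Fintype ι] {c : ι → ℝ} (hc : c ≠ 0) (d : ℝ) :
    volume {y : ι → ℝ | ∑ i, c i * y i = d} = 0 := by
  let L : (ι → ℝ) →ₗ[ℝ] ℝ := Fintype.linearCombination ℝ c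
  have hL : ∀ y, L y = ∑ i, c i * y i := fun y => by
    simp [L, Fintype.linearCombination_apply, mul_comm]
  have hL0 : L ≠ 0 := fun h => hc <| funext fun i => by
    simpa [L] using LinearMap.congr_fun h (Pi.single i 1)
  obtain ⟨y₀, hy₀⟩ := (L.surjective_or_eq_zero.resolve_right hL0) d
  have hset : {y : ι → ℝ | ∑ i, c i * y i = d} =
      (· + -y₀) ⁻¹' (LinearMap.ker L : Set (ι → ℝ)) := by
    ext y
    simp only [mem_ofPred_eq, mem_preimage, SetLike.mem_coe, LinearMap.mem_ker, map_add, map_neg,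
      hy₀, ← hL, add_neg_eq_zero]
  rw [hset, measure_preimage_add_right]
  exact Measure.addHaar_submodule volume _ (mt LinearMap.ker_eq_top.1 hL0)

section ChangeOfVariables

variable {ι : Type*}

lemma det_pi_smul_proj [Fintype ι] (c : ι → ℝ) :
    (ContinuousLinearMap.pi fun i =>
      c i • ContinuousLinearMap.proj (R := ℝ) (φ := fun _ : ι => ℝ) i).det = ∏ i, c i := by
  have h : ((ContinuousLinearMap.pi fun i =>
      c i • ContinuousLinearMap.proj (R := ℝ) (φ := fun _ : ι => ℝ) i) :
      (ι → ℝ) →ₗ[ℝ] (ι → ℝ)) = Matrix.toLin' (Matrix.diagonal c) := by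
    ext x i
    simp [Matrix.mulVec_diagonal]
  rw [ContinuousLinearMap.det, h, LinearMap.det_toLin', Matrix.det_diagonal]

lemma hasFDerivAt_exp_neg_mul [Fintype ι] (t : ℝ) (y : ι → ℝ) :
    HasFDerivAt (fun y : ι → ℝ => fun i => exp (-(t * y i)))
      (ContinuousLinearMap.pi fun i =>
        (-t * exp (-(t * y i))) • ContinuousLinearMap.proj (R := ℝ) (φ := fun _ : ι => ℝ) i) y := by
  refine hasFDerivAt_pi.2 fun i => ?_
  have h := ((hasFDerivAt_apply i y).const_mul (-t)).exp
  rw [smul_smul, mul_comm (exp _)] at h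
  simpa only [neg_mul] using h

lemma image_exp_neg_mul_Ici {t : ℝ} (ht : 0 < t) :
    (fun y : ι → ℝ => fun i => exp (-(t * y i))) '' Ici 0 = univ.pi fun _ => Ioc 0 1 := by
  ext x
  constructor
  · rintro ⟨y, hy, rfl⟩ i -
    exact ⟨exp_pos _, exp_le_one_iff.2 (neg_nonpos.2 (mul_nonneg ht.le (hy i)))⟩
  · intro hx
    refine ⟨fun i => -log (x i) / t, fun i => ?_, funext fun i => ?_⟩
    · obtain ⟨hx0, hx1⟩ := hx i (mem_univ i)
      exact div_nonneg (neg_nonneg.2 (log_nonpos hx0.le hx1)) ht.le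
    · simp only [mul_div_cancel₀ _ ht.ne', neg_neg, exp_log (hx i (mem_univ i)).1]

lemma lintegral_pi_Ioc_eq_lintegral_Ici_exp [Fintype ι] {t : ℝ} (ht : 0 < t) (g : (ι → ℝ) → ℝ≥0∞) :
    ∫⁻ x in univ.pi (fun _ => Ioc (0 : ℝ) 1), g x =
      ∫⁻ y in Ici (0 : ι → ℝ), ENNReal.ofReal (t ^ Fintype.card ι * exp (-(t * ∑ i, y i))) *
        g (fun i => exp (-(t * y i))) := by
  have hinj : Function.Injective (fun y : ι → ℝ => fun i => exp (-(t * y i))) :=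
    fun y z h => funext fun i => by
      simpa [ht.ne'] using congrFun h i
  rw [← image_exp_neg_mul_Ici ht, lintegral_image_eq_lintegral_abs_det_fderiv_mul volume
    measurableSet_Ici (fun y _ => (hasFDerivAt_exp_neg_mul t y).hasFDerivWithinAt)
    hinj.injOn]
  refine setLIntegral_congr_fun measurableSet_Ici fun y _ => ?_
  rw [det_pi_smul_proj, Finset.abs_prod]
  congr 2
  simp only [abs_mul, abs_neg, abs_of_pos ht, abs_exp, Finset.prod_mul_distrib, Finset.prod_const,
    Finset.card_univ, ← exp_sum, Finset.mul_sum, Finset.sum_neg_distrib]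

end ChangeOfVariables

lemma div_le_card_mul_div_sum {ι : Type*} {s : Finset ι} {f : ι → ℝ} {p : ι} (hp : p ∈ s)
    (hf : ∀ q ∈ s, 0 < f q) (hmax : ∀ q ∈ s, f q ≤ f p) {K : ℝ} (hK : 0 ≤ K) :
    K / f p ≤ s.card * (K / ∑ q ∈ s, f q) := by
  have hcard : (0 : ℝ) < s.card := by exact_mod_cast Finset.card_pos.2 ⟨p, hp⟩
  have hsum : ∑ q ∈ s, f q ≤ s.card * f p := by
    simpa using Finset.sum_le_card_nsmul s f (f p) hmax
  calc K / f p = (s.card * K) / (s.card * f p) := (mul_div_mul_left _ _ hcard.ne').symm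
    _ ≤ (s.card * K) / ∑ q ∈ s, f q :=
      div_le_div_of_nonneg_left (by positivity) (Finset.sum_pos hf ⟨p, hp⟩) hsum
    _ = s.card * (K / ∑ q ∈ s, f q) := mul_div_assoc _ _ _

section Decomposition

variable {N : ℕ} {G : Finset ((Fin N → ℕ) × ℝ)}

-- `x ^ a * r ^ s = r ^ affineForm a s y` when `x i = r ^ y i`.
def affineForm (a : Fin N → ℕ) (s : ℝ) (y : Fin N → ℝ) : ℝ :=
  ∑ i, (a i : ℝ) * y i + s

lemma sum_sub_mul_le_iff (a a' : Fin N → ℕ) (s s' : ℝ) (y : Fin N → ℝ) :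
    ∑ i, ((a i : ℝ) - a' i) * y i ≤ s' - s ↔ affineForm a s y ≤ affineForm a' s' y := by
  simp only [affineForm, sub_mul, Finset.sum_sub_distrib]
  constructor <;> intro h <;> linarith

lemma mem_Pset_iff {a : Fin N → ℕ} {s : ℝ} {y : Fin N → ℝ} :
    y ∈ Pset N G a s ↔ 0 ≤ y ∧ ∀ q ∈ G, affineForm a s y ≤ affineForm q.1 q.2 y := by
  simp only [Pset, mem_ofPred_eq, Pi.le_def, Pi.zero_apply, sum_sub_mul_le_iff]

lemma measurableSet_Pset (a : Fin N → ℕ) (s : ℝ) : MeasurableSet (Pset N G a s) := by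
  refine IsClosed.measurableSet ?_
  simp only [Pset, ofPred_and, ofPred_forall]
  exact (isClosed_iInter fun i => isClosed_le continuous_const (continuous_apply i)).inter
    (isClosed_iInter fun p => isClosed_iInter fun _ => isClosed_le (by fun_prop) continuous_const)

lemma Pset_subset_Ici (a : Fin N → ℕ) (s : ℝ) : Pset N G a s ⊆ Ici 0 :=
  fun _ hy => (mem_Pset_iff.1 hy).1

lemma Ici_subset_biUnion_Pset (hG : G.Nonempty) : Ici 0 ⊆ ⋃ p ∈ G, Pset N G p.1 p.2 := by
  intro y hy
  obtain ⟨p, hpG, hmin⟩ := G.exists_min_image (fun q => affineForm q.1 q.2 y) hG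
  exact mem_biUnion hpG (mem_Pset_iff.2 ⟨hy, hmin⟩)

lemma volume_Pset_inter_Pset {p q : (Fin N → ℕ) × ℝ} (hp : p ∈ G) (hq : q ∈ G) (hpq : p ≠ q) :
    volume (Pset N G p.1 p.2 ∩ Pset N G q.1 q.2) = 0 := by
  have hsub : Pset N G p.1 p.2 ∩ Pset N G q.1 q.2 ⊆
      {y | ∑ i, ((p.1 i : ℝ) - q.1 i) * y i = q.2 - p.2} := fun y ⟨hyp, hyq⟩ => by
    have h₁ := (mem_Pset_iff.1 hyp).2 q hq
    have h₂ := (mem_Pset_iff.1 hyq).2 p hp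
    simp only [affineForm] at h₁ h₂
    simp only [mem_ofPred_eq, sub_mul, Finset.sum_sub_distrib]
    linarith
  by_cases ha : p.1 = q.1
  · refine measure_mono_null (fun y hy => ?_) measure_empty
    have := hsub hy
    simp only [ha, sub_self, zero_mul, Finset.sum_const_zero, mem_ofPred_eq] at this
    exact hpq (Prod.ext ha (by linarith))
  · refine measure_mono_null hsub (volume_setOf_sum_mul_eq (fun h => ha (funext fun i => ?_)) _)
    exact_mod_cast sub_eq_zero.1 (congrFun h i)

lemma Ici_ae_eq_biUnion_Gcirc (hG : G.Nonempty) :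
    (Ici 0 : Set (Fin N → ℝ)) =ᵐ[volume] ⋃ p ∈ Gcirc N G, Pset N G p.1 p.2 := by
  have hnull : volume (⋃ p ∈ G \ Gcirc N G, Pset N G p.1 p.2) = 0 := by
    refine (measure_biUnion_null_iff (G \ Gcirc N G).countable_toSet).2 fun p hp => ?_
    obtain ⟨hpG, hpc⟩ := Finset.mem_sdiff.1 hp
    simpa [Gcirc, hpG] using hpc
  refine ae_eq_set.2 ⟨measure_mono_null (fun y hy => ?_) hnull, ?_⟩
  · obtain ⟨p, hpG, hyp⟩ := mem_iUnion₂.1 (Ici_subset_biUnion_Pset hG hy.1)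
    refine mem_biUnion (Finset.mem_sdiff.2 ⟨hpG, fun hpc => hy.2 ?_⟩) hyp
    exact mem_biUnion hpc hyp
  · have hsub : (⋃ p ∈ Gcirc N G, Pset N G p.1 p.2) ⊆ Ici 0 :=
      iUnion₂_subset fun p _ => Pset_subset_Ici p.1 p.2
    rw [sdiff_eq_empty.2 hsub, measure_empty]

lemma setLIntegral_Ici_eq_sum_Gcirc (hG : G.Nonempty) (g : (Fin N → ℝ) → ℝ≥0∞) :
    ∫⁻ y in Ici 0, g y = ∑ p ∈ Gcirc N G, ∫⁻ y in Pset N G p.1 p.2, g y := by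
  rw [setLIntegral_congr (Ici_ae_eq_biUnion_Gcirc hG)]
  refine lintegral_biUnion_finset₀ (fun p hp q hq hpq => ?_)
    (fun p _ => (measurableSet_Pset p.1 p.2).nullMeasurableSet) g
  exact volume_Pset_inter_Pset (Finset.mem_filter.1 hp).1 (Finset.mem_filter.1 hq).1 hpq

end Decomposition

section Integrands

variable {N : ℕ}

-- With `x i = exp (-(t * y i))`: the Jacobian `t ^ N * exp (-(t * ∑ i, y i))` times `x ^ b`.
noncomputable def jacobianWeight (b : Fin N → ℕ) (t : ℝ) (y : Fin N → ℝ) : ℝ :=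
  t ^ N * exp (-(t * ∑ i, ((b i : ℝ) + 1) * y i))

lemma jacobianWeight_nonneg {t : ℝ} (ht : 0 ≤ t) (b : Fin N → ℕ) (y : Fin N → ℝ) :
    0 ≤ jacobianWeight b t y := by
  unfold jacobianWeight
  positivity

noncomputable def substIntegrand (G : Finset ((Fin N → ℕ) × ℝ)) (b : Fin N → ℕ) (t : ℝ)
    (y : Fin N → ℝ) : ℝ≥0∞ :=
  ENNReal.ofReal (jacobianWeight b t y / ∑ q ∈ G, exp (-(t * affineForm q.1 q.2 y)))

lemma prod_exp_neg_mul_pow (t : ℝ) (y : Fin N → ℝ) (k : Fin N → ℕ) :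
    ∏ i, exp (-(t * y i)) ^ k i = exp (-(t * ∑ i, (k i : ℝ) * y i)) := by
  simp only [← exp_nat_mul, ← exp_sum, Finset.mul_sum, ← Finset.sum_neg_distrib]
  congr 1
  exact Finset.sum_congr rfl fun i _ => by ring

lemma rpow_eq_exp_neg_log_one_div {r : ℝ} (hr : 0 < r) (s : ℝ) :
    r ^ s = exp (-(log (1 / r) * s)) := by
  rw [rpow_def_of_pos hr, one_div, log_inv, neg_mul, neg_neg]

lemma log_one_div_pos {r : ℝ} (hr0 : 0 < r) (hr1 : r < 1) : 0 < log (1 / r) := by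
  rw [one_div, log_inv, neg_pos]
  exact log_neg hr0 hr1

lemma Ifun_eq_setLIntegral (G : Finset ((Fin N → ℕ) × ℝ)) (b : Fin N → ℕ) {r : ℝ}
    (hr0 : 0 < r) (hr1 : r < 1) :
    Ifun N G b r = ∫⁻ y in Ici 0, substIntegrand G b (log (1 / r)) y := by
  have ht := log_one_div_pos hr0 hr1
  simp only [Ifun, rpow_eq_exp_neg_log_one_div hr0]
  set t := log (1 / r)
  rw [lintegral_pi_Ioc_eq_lintegral_Ici_exp ht, Fintype.card_fin]
  refine setLIntegral_congr_fun measurableSet_Ici fun y _ => ?_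
  rw [substIntegrand, ← ENNReal.ofReal_mul (by positivity)]
  congr 1
  simp only [prod_exp_neg_mul_pow, jacobianWeight, affineForm, mul_div_assoc, ← exp_add]
  rw [mul_assoc, ← mul_div_assoc (exp _), ← exp_add]
  congr 2
  · congr 1
    simp only [add_mul, one_mul, Finset.sum_add_distrib]
    ring
  · exact Finset.sum_congr rfl fun q _ => by rw [mul_add, neg_add]

lemma Jfun_eq_setLIntegral (G : Finset ((Fin N → ℕ) × ℝ)) (b a : Fin N → ℕ) (s : ℝ) {r : ℝ}
    (hr0 : 0 < r) (hr1 : r < 1) :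
    Jfun N G b a s r = ∫⁻ y in Pset N G a s, ENNReal.ofReal (jacobianWeight b (log (1 / r)) y /
      exp (-(log (1 / r) * affineForm a s y))) := by
  have ht := log_one_div_pos hr0 hr1
  rw [Jfun, ← lintegral_const_mul' _ _ ENNReal.ofReal_ne_top, rpow_eq_exp_neg_log_one_div hr0]
  refine lintegral_congr fun y => ?_
  rw [← ENNReal.ofReal_mul (by positivity)]
  congr 1
  rw [jacobianWeight, div_mul_eq_mul_div, mul_div_assoc, mul_div_assoc, ← exp_sub, ← exp_sub]
  congr 2
  simp only [phiFun, affineForm, sub_mul, add_mul, one_mul, Finset.sum_sub_distrib,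
    Finset.sum_add_distrib]
  ring

end Integrands

section Comparison

variable {N : ℕ} {G : Finset ((Fin N → ℕ) × ℝ)} {b : Fin N → ℕ} {p : (Fin N → ℕ) × ℝ} {r : ℝ}

lemma exp_neg_mul_affineForm_le {t : ℝ} (ht : 0 ≤ t) {y : Fin N → ℝ} (hy : y ∈ Pset N G p.1 p.2)
    {q : (Fin N → ℕ) × ℝ} (hq : q ∈ G) :
    exp (-(t * affineForm q.1 q.2 y)) ≤ exp (-(t * affineForm p.1 p.2 y)) :=
  exp_le_exp.2 (neg_le_neg (mul_le_mul_of_nonneg_left ((mem_Pset_iff.1 hy).2 q hq) ht))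

lemma setLIntegral_Pset_le_Jfun (hr0 : 0 < r) (hr1 : r < 1) (hp : p ∈ G) :
    ∫⁻ y in Pset N G p.1 p.2, substIntegrand G b (log (1 / r)) y ≤ Jfun N G b p.1 p.2 r := by
  rw [Jfun_eq_setLIntegral G b p.1 p.2 hr0 hr1]
  refine setLIntegral_mono' (measurableSet_Pset _ _) fun y _ => ?_
  rw [substIntegrand]
  set t := log (1 / r)
  have hsum : exp (-(t * affineForm p.1 p.2 y)) ≤ ∑ q ∈ G, exp (-(t * affineForm q.1 q.2 y)) :=
    Finset.single_le_sum (fun q _ => (exp_pos (-(t * affineForm q.1 q.2 y))).le) hp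
  exact ENNReal.ofReal_le_ofReal <| div_le_div_of_nonneg_left
    (jacobianWeight_nonneg (log_one_div_pos hr0 hr1).le b y) (exp_pos _) hsum

lemma Jfun_le_card_mul_setLIntegral_Pset (hr0 : 0 < r) (hr1 : r < 1) (hp : p ∈ G) :
    Jfun N G b p.1 p.2 r ≤
      G.card * ∫⁻ y in Pset N G p.1 p.2, substIntegrand G b (log (1 / r)) y := by
  have ht := (log_one_div_pos hr0 hr1).le
  rw [Jfun_eq_setLIntegral G b p.1 p.2 hr0 hr1,
    ← lintegral_const_mul' _ _ (ENNReal.natCast_ne_top _)]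
  refine setLIntegral_mono' (measurableSet_Pset _ _) fun y hy => ?_
  rw [substIntegrand, ← ENNReal.ofReal_natCast, ← ENNReal.ofReal_mul (Nat.cast_nonneg _)]
  have hmax : ∀ q ∈ G, exp (-(log (1 / r) * affineForm q.1 q.2 y)) ≤
      exp (-(log (1 / r) * affineForm p.1 p.2 y)) := fun q hq => exp_neg_mul_affineForm_le ht hy hq
  exact ENNReal.ofReal_le_ofReal (div_le_card_mul_div_sum hp (fun q _ => exp_pos _) hmax
    (jacobianWeight_nonneg ht b y))

end Comparison

theorem stmt5_general (N : ℕ) (G : Finset ((Fin N → ℕ) × ℝ)) (hGne : G.Nonempty) (b : Fin N → ℕ) :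
    ∃ C : ℝ, 0 < C ∧ C < 1 ∧ ∀ r : ℝ, 0 < r → r < 1 →
      ENNReal.ofReal C * (∑ p ∈ Gcirc N G, Jfun N G b p.1 p.2 r) ≤ Ifun N G b r ∧
      Ifun N G b r ≤ ∑ p ∈ Gcirc N G, Jfun N G b p.1 p.2 r := by
  have hcard : (1 : ℝ) ≤ G.card := by exact_mod_cast Finset.card_pos.2 hGne
  have hC : ENNReal.ofReal (1 / (G.card + 1)) * G.card ≤ 1 := by
    rw [← ENNReal.ofReal_natCast, ← ENNReal.ofReal_mul (by positivity), ENNReal.ofReal_le_one,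
      div_mul_eq_mul_div, one_mul, div_le_one (by positivity)]
    linarith
  refine ⟨1 / (G.card + 1), by positivity, (div_lt_one (by positivity)).2 (by linarith),
    fun r hr0 hr1 => ?_⟩
  have hGcirc : ∀ p ∈ Gcirc N G, p ∈ G := fun p hp => (Finset.mem_filter.1 hp).1
  rw [Ifun_eq_setLIntegral G b hr0 hr1, setLIntegral_Ici_eq_sum_Gcirc hGne, Finset.mul_sum]
  refine ⟨Finset.sum_le_sum fun p hp => ?_,
    Finset.sum_le_sum fun p hp => setLIntegral_Pset_le_Jfun hr0 hr1 (hGcirc p hp)⟩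
  calc ENNReal.ofReal (1 / (G.card + 1)) * Jfun N G b p.1 p.2 r
      ≤ ENNReal.ofReal (1 / (G.card + 1)) *
          (G.card * ∫⁻ y in Pset N G p.1 p.2, substIntegrand G b (log (1 / r)) y) :=
        mul_le_mul_right (Jfun_le_card_mul_setLIntegral_Pset hr0 hr1 (hGcirc p hp)) _
    _ ≤ ∫⁻ y in Pset N G p.1 p.2, substIntegrand G b (log (1 / r)) y := by
        rw [← mul_assoc]
        exact mul_le_of_le_one_left' hC

/-- Under assumption (A) (`I(r) < ∞` for all `0 < r < 1`), there is a constant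
`C ∈ (0,1)` such that `C · Σ_{(a,s)∈𝔊°} J_{a,s}(r) ≤ I(r) ≤ Σ_{(a,s)∈𝔊°} J_{a,s}(r)`
for all `r ∈ (0,1)`. -/
theorem stmt5 (N : ℕ) (hN : 1 ≤ N) (G : Finset ((Fin N → ℕ) × ℝ)) (hGne : G.Nonempty)
    (hGs : ∀ p ∈ G, 0 ≤ p.2) (b : Fin N → ℕ)
    (hA : ∀ r : ℝ, 0 < r → r < 1 → Ifun N G b r < ⊤) :
    ∃ C : ℝ, 0 < C ∧ C < 1 ∧ ∀ r : ℝ, 0 < r → r < 1 →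
      ENNReal.ofReal C * (∑ p ∈ Gcirc N G, Jfun N G b p.1 p.2 r) ≤ Ifun N G b r ∧
      Ifun N G b r ≤ ∑ p ∈ Gcirc N G, Jfun N G b p.1 p.2 r :=
  stmt5_general N G hGne b
end

section
/- For every δ > 0, the tube T(δ) = ⋃_{0≤t≤δ} F(t) equals the convex hull of F(δ) ∪ F(0). -/
/-! Since the `tε`-ball is `t` times the `ε`-ball, `F(t) = A + t • C` with the convex sets
`A = B̄^d_r + {x₀}` and `C = B̄^{N−1}_ε + {ηu}`. A point `a + t • c` of `F(t)` is the convex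
combination `(1 - t/δ) • a + (t/δ) • (a + δ • c)` of points of `F(0)` and `F(δ)`. Conversely,
`⋃ t ∈ [0, δ], A + t • C` is convex because `λ • (s • C) + μ • (t • C) = (λ s + μ t) • C`
for convex `C`, so it contains the convex hull. -/

open scoped Pointwise

/-- The set `F(t) = B̄^d_r + B̄^{N−1}_{tε} + {x₀ + tηu}` (Minkowski sum) in `ℝ^N`,
`N = n+1`, where `B̄^d_r` is the closed ball of radius `r` centered at `0` in the
`d`-dimensional subspace `Ed ⊆ E = {x : x_N = 0}`, `B̄^{N−1}_{tε}` is the closed ball of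
radius `tε` centered at `0` in `E`, and `η = ⟨u, e_N⟩⁻¹`. -/
def Fset (n : ℕ) (Ed : Submodule ℝ (Fin (n+1) → ℝ)) (r ε : ℝ)
    (x₀ u : Fin (n+1) → ℝ) (t : ℝ) : Set (Fin (n+1) → ℝ) :=
  {y | y ∈ Ed ∧ ∑ i, (y i) ^ 2 ≤ r ^ 2} +
  {y | y (Fin.last n) = 0 ∧ ∑ i, (y i) ^ 2 ≤ (t * ε) ^ 2} +
  {x₀ + (t * (u (Fin.last n))⁻¹) • u}

open Set

section SumSq

variable {ι : Type*} [Fintype ι] (W : Submodule ℝ (ι → ℝ))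

theorem sum_sq_smul (t : ℝ) (y : ι → ℝ) : ∑ i, (t • y) i ^ 2 = t ^ 2 * ∑ i, y i ^ 2 := by
  simp only [Pi.smul_apply, smul_eq_mul, mul_pow, Finset.mul_sum]

theorem sum_sq_le_sq_iff_norm_toLp_le (y : ι → ℝ) (c : ℝ) :
    ∑ i, y i ^ 2 ≤ c ^ 2 ↔ ‖WithLp.toLp 2 y‖ ≤ |c| := by
  rw [← sq_le_sq₀ (norm_nonneg _) (abs_nonneg c), sq_abs, EuclideanSpace.norm_sq_eq]
  simp

theorem convex_setOf_mem_and_sum_sq_le (c : ℝ) :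
    Convex ℝ {y | y ∈ W ∧ ∑ i, y i ^ 2 ≤ c ^ 2} := by
  have hball : {y : ι → ℝ | ∑ i, y i ^ 2 ≤ c ^ 2} =
      (WithLp.linearEquiv 2 ℝ (ι → ℝ)).symm ⁻¹' Metric.closedBall 0 |c| := by
    ext y
    simp [sum_sq_le_sq_iff_norm_toLp_le]
  have hconv : Convex ℝ {y : ι → ℝ | ∑ i, y i ^ 2 ≤ c ^ 2} :=
    hball ▸ (convex_closedBall 0 |c|).linear_preimage _
  exact W.convex.inter hconv

theorem setOf_mem_and_sum_sq_le_mul_sq {t : ℝ} (ht : 0 ≤ t) (c : ℝ) :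
    {y | y ∈ W ∧ ∑ i, y i ^ 2 ≤ (t * c) ^ 2} = t • {y | y ∈ W ∧ ∑ i, y i ^ 2 ≤ c ^ 2} := by
  rcases ht.eq_or_lt with rfl | ht
  · have h0 : (0 : ι → ℝ) ∈ {y | y ∈ W ∧ ∑ i, y i ^ 2 ≤ c ^ 2} := ⟨W.zero_mem, by simp [sq_nonneg]⟩
    rw [zero_smul_set ⟨0, h0⟩]
    ext y
    have hy : ∑ i, y i ^ 2 ≤ 0 ↔ y = 0 := by simpa using sum_sq_le_sq_iff_norm_toLp_le y 0
    simp only [zero_mul, zero_pow two_ne_zero, mem_ofPred_eq, hy, mem_zero]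
    exact and_iff_right_of_imp fun h => h ▸ W.zero_mem
  · ext y
    rw [mem_smul_set_iff_inv_smul_mem₀ ht.ne']
    simp only [mem_ofPred_eq, sum_sq_smul, W.smul_mem_iff (inv_ne_zero ht.ne'), mul_pow, inv_pow,
      inv_mul_le_iff₀ (by positivity : 0 < t ^ 2)]

end SumSq

section Tube

variable {E : Type*} [AddCommGroup E] [Module ℝ E] {A C : Set E}

theorem Convex.biUnion_add_smul (hA : Convex ℝ A) (hC : Convex ℝ C) {I : Set ℝ}
    (hI : Convex ℝ I) (hI₀ : I ⊆ Ici 0) : Convex ℝ (⋃ t ∈ I, A + t • C) := by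
  rintro x hx y hy a b ha hb hab
  simp only [mem_iUnion, exists_prop] at hx hy ⊢
  obtain ⟨s, hs, p, hp, _, ⟨c, hc, rfl⟩, rfl⟩ := hx
  obtain ⟨t, ht, q, hq, _, ⟨d, hd, rfl⟩, rfl⟩ := hy
  have hs₀ : 0 ≤ s := hI₀ hs
  have ht₀ : 0 ≤ t := hI₀ ht
  refine ⟨a * s + b * t, hI hs ht ha hb hab, a • p + b • q, hA hp hq ha hb hab,
    (a * s) • c + (b * t) • d, ?_, by module⟩
  rw [hC.add_smul (by positivity) (by positivity)]
  exact add_mem_add (smul_mem_smul_set hc) (smul_mem_smul_set hd)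

theorem biUnion_Icc_add_smul_eq_convexHull (hA : Convex ℝ A) (hC : Convex ℝ C)
    (hC₀ : C.Nonempty) {δ : ℝ} (hδ : 0 < δ) :
    ⋃ t ∈ Icc 0 δ, A + t • C = convexHull ℝ ((A + δ • C) ∪ (A + (0 : ℝ) • C)) := by
  refine (iUnion₂_subset fun t ht => ?_).antisymm <| convexHull_min
    (union_subset (subset_biUnion_of_mem (u := fun t => A + t • C) (right_mem_Icc.2 hδ.le))
      (subset_biUnion_of_mem (u := fun t => A + t • C) (left_mem_Icc.2 hδ.le)))
    (hA.biUnion_add_smul hC (convex_Icc 0 δ) Icc_subset_Ici_self)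
  rintro _ ⟨a, ha, _, ⟨c, hc, rfl⟩, rfl⟩
  have hcombo : a + t • c = (1 - t / δ) • a + (t / δ) • (a + δ • c) := by
    rw [smul_add, smul_smul, div_mul_cancel₀ t hδ.ne']
    module
  have ha' : a ∈ A + (0 : ℝ) • C := by rwa [zero_smul_set hC₀, add_zero]
  show a + t • c ∈ _
  rw [hcombo]
  exact convex_convexHull ℝ _ (subset_convexHull ℝ _ (mem_union_right _ ha'))
    (subset_convexHull ℝ _ (mem_union_left _ (add_mem_add ha (smul_mem_smul_set hc))))
    (sub_nonneg.2 ((div_le_one hδ).2 ht.2)) (div_nonneg ht.1 hδ.le) (by ring)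

end Tube

theorem Fset_eq_add_smul (n : ℕ) (Ed : Submodule ℝ (Fin (n+1) → ℝ)) (r ε : ℝ)
    (x₀ u : Fin (n+1) → ℝ) {t : ℝ} (ht : 0 ≤ t) :
    Fset n Ed r ε x₀ u t = ({y | y ∈ Ed ∧ ∑ i, y i ^ 2 ≤ r ^ 2} + {x₀}) +
      t • ({y | y (Fin.last n) = 0 ∧ ∑ i, y i ^ 2 ≤ ε ^ 2} + {(u (Fin.last n))⁻¹ • u}) := by
  have hball := setOf_mem_and_sum_sq_le_mul_sq (LinearMap.ker (LinearMap.proj (Fin.last n))) ht ε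
  simp only [LinearMap.mem_ker, LinearMap.proj_apply] at hball
  rw [Fset, hball, smul_add, smul_set_singleton, mul_smul, ← singleton_add_singleton]
  abel

theorem stmt8_general (n : ℕ)
    (Ed : Submodule ℝ (Fin (n+1) → ℝ))
    (r ε : ℝ)
    (x₀ : Fin (n+1) → ℝ)
    (u : Fin (n+1) → ℝ)
    (δ : ℝ) (hδ : 0 < δ) :
    (⋃ t ∈ Set.Icc (0 : ℝ) δ, Fset n Ed r ε x₀ u t) =
      convexHull ℝ (Fset n Ed r ε x₀ u δ ∪ Fset n Ed r ε x₀ u 0) := by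
  have hC₀ : ({y : Fin (n+1) → ℝ | y (Fin.last n) = 0 ∧ ∑ i, y i ^ 2 ≤ ε ^ 2} +
      {(u (Fin.last n))⁻¹ • u}).Nonempty :=
    Nonempty.add ⟨0, rfl, by simp [sq_nonneg]⟩ (singleton_nonempty _)
  rw [iUnion₂_congr fun t ht => Fset_eq_add_smul n Ed r ε x₀ u ht.1,
    Fset_eq_add_smul n Ed r ε x₀ u hδ.le, Fset_eq_add_smul n Ed r ε x₀ u le_rfl]
  exact biUnion_Icc_add_smul_eq_convexHull
    ((convex_setOf_mem_and_sum_sq_le Ed r).add (convex_singleton x₀))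
    ((convex_setOf_mem_and_sum_sq_le (LinearMap.ker (LinearMap.proj (Fin.last n))) ε).add
      (convex_singleton _)) hC₀ hδ

/-- for every `δ > 0`, the tube `T(δ) = ⋃_{0 ≤ t ≤ δ} F(t)` equals the convex
hull of `F(δ) ∪ F(0)`. -/
theorem stmt8 (n : ℕ) (hn : 1 ≤ n) (d : ℕ) (hd : d ≤ n)
    (Ed : Submodule ℝ (Fin (n+1) → ℝ))
    (hEdE : ∀ y ∈ Ed, y (Fin.last n) = 0)
    (hEdrank : Module.finrank ℝ Ed = d)
    (r ε : ℝ) (hr : 0 < r) (hε : 0 < ε)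
    (x₀ : Fin (n+1) → ℝ) (hx₀ : x₀ (Fin.last n) = 0)
    (u : Fin (n+1) → ℝ) (hu : ∑ i, (u i) ^ 2 = 1) (huN : 0 < u (Fin.last n))
    (δ : ℝ) (hδ : 0 < δ) :
    (⋃ t ∈ Set.Icc (0 : ℝ) δ, Fset n Ed r ε x₀ u t) =
      convexHull ℝ (Fset n Ed r ε x₀ u δ ∪ Fset n Ed r ε x₀ u 0) :=
  stmt8_general n Ed r ε x₀ u δ hδ
end

section
/- Let P ⊆ ℝ^N be a polyhedron with positive N-dimensional Lebesgue measure and let f : ℝ^N → ℝ be an affine function such that Q := P ∩ {x ∈ ℝ^N : f(x) = 0} is nonempty. If Q is not a face of P, then the (N−1)-dimensional Hausdorff measure of Q is positive. -/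
/-!
If `Q = P ∩ {f = 0}` is not a face, then `f` takes both signs on `P`: otherwise `f` or `-f`
would exhibit `Q` as a face. A convex set of positive volume has an interior point, and walking
from it towards a point of `P` where `f` has the opposite sign produces an interior point `y` of
`P` with `f y = 0`. Near `y`, `Q` contains an open piece of the hyperplane `{f = 0}`, an
`(N - 1)`-dimensional affine subspace on which `μH[N - 1]` is a Haar measure, hence positive on
nonempty open sets.
-/

open MeasureTheory Set Module

section

variable {E : Type*} [NormedAddCommGroup E] [NormedSpace ℝ E]

theorem convex_iInter_setOf_nonpos {ι : Type*} (g : ι → E →ᵃ[ℝ] ℝ) :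
    Convex ℝ (⋂ i, {x | g i x ≤ 0}) :=
  convex_iInter fun i => (convex_Iic 0).affine_preimage (g i)

def IsFace (P F : Set E) : Prop :=
  ∃ g : E →ᵃ[ℝ] ℝ, (∀ x ∈ P, g x ≤ 0) ∧ F = P ∩ {x | g x = 0}

theorem exists_pos_of_not_isFace {P : Set E} {f : E →ᵃ[ℝ] ℝ}
    (h : ¬ IsFace P (P ∩ {x | f x = 0})) : ∃ a ∈ P, 0 < f a := by
  by_contra! hf
  exact h ⟨f, hf, rfl⟩

theorem exists_neg_of_not_isFace {P : Set E} {f : E →ᵃ[ℝ] ℝ}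
    (h : ¬ IsFace P (P ∩ {x | f x = 0})) : ∃ b ∈ P, f b < 0 := by
  have h' : ¬ IsFace P (P ∩ {x | (-f) x = 0}) := by
    simpa only [AffineMap.coe_neg, Pi.neg_apply, neg_eq_zero] using h
  simpa using exists_pos_of_not_isFace h'

theorem Convex.exists_mem_interior_eq_zero_of_nonpos_of_pos {s : Set E} (hs : Convex ℝ s)
    (f : E →ᵃ[ℝ] ℝ) {x a : E} (hx : x ∈ interior s) (ha : a ∈ s) (hfx : f x ≤ 0)
    (hfa : 0 < f a) : ∃ y ∈ interior s, f y = 0 := by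
  set t := f x / (f x - f a)
  have hden : f x - f a < 0 := by linarith
  have ht0 : 0 ≤ t := div_nonneg_of_nonpos hfx hden.le
  have ht1 : t < 1 := by rw [div_lt_one_of_neg hden]; linarith
  refine ⟨AffineMap.lineMap x a t, ?_, ?_⟩
  · rw [AffineMap.lineMap_apply_module]
    exact hs.combo_interior_self_mem_interior hx ha (by linarith) ht0 (by ring)
  · rw [f.apply_lineMap, AffineMap.lineMap_apply_ring']
    have ht : t * (f x - f a) = f x := div_mul_cancel₀ _ hden.ne
    linear_combination -ht

theorem Convex.exists_mem_interior_eq_zero {s : Set E} (hs : Convex ℝ s) (f : E →ᵃ[ℝ] ℝ)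
    (hint : (interior s).Nonempty) {a b : E} (ha : a ∈ s) (hb : b ∈ s) (hfa : 0 < f a)
    (hfb : f b < 0) : ∃ y ∈ interior s, f y = 0 := by
  obtain ⟨x, hx⟩ := hint
  rcases le_or_gt (f x) 0 with hfx | hfx
  · exact hs.exists_mem_interior_eq_zero_of_nonpos_of_pos f hx ha hfx hfa
  · obtain ⟨y, hy, hfy⟩ := hs.exists_mem_interior_eq_zero_of_nonpos_of_pos (-f) hx hb
      (by simpa using hfx.le) (by simpa using hfb)
    exact ⟨y, hy, by simpa using hfy⟩

theorem Convex.interior_nonempty_of_measure_pos [MeasurableSpace E] [BorelSpace E]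
    [FiniteDimensional ℝ E] {s : Set E} (hs : Convex ℝ s) (μ : Measure E) [μ.IsAddHaarMeasure]
    (h : 0 < μ s) : (interior s).Nonempty := by
  rw [hs.interior_nonempty_iff_affineSpan_eq_top]
  by_contra hspan
  exact h.ne' <|
    measure_mono_null (subset_affineSpan ℝ s) (Measure.addHaar_affineSubspace μ _ hspan)

theorem AffineSubspace.hausdorffMeasure_inter_pos [MeasurableSpace E] [BorelSpace E]
    (A : AffineSubspace ℝ E) [FiniteDimensional ℝ A.direction] {U : Set E} (hU : IsOpen U)
    (hA : (U ∩ A).Nonempty) : 0 < μH[finrank ℝ A.direction] (U ∩ A) := by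
  obtain ⟨p, hpU, hpA⟩ := hA
  set φ : A.direction → E := fun v => (v : E) + p
  have hφ : Isometry φ := (IsometryEquiv.addRight p).isometry.comp isometry_subtype_coe
  have hpre : 0 < μH[finrank ℝ A.direction] (φ ⁻¹' U) :=
    (hU.preimage (by fun_prop)).measure_pos _ ⟨0, by simpa [φ] using hpU⟩
  rw [← hφ.hausdorffMeasure_image (Or.inl (Nat.cast_nonneg _))] at hpre
  refine hpre.trans_le (measure_mono ?_)
  rintro _ ⟨v, hv, rfl⟩
  exact ⟨hv, AffineSubspace.vadd_mem_of_mem_direction v.2 hpA⟩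

theorem AffineMap.hausdorffMeasure_inter_setOf_eq_zero_pos [MeasurableSpace E] [BorelSpace E]
    [FiniteDimensional ℝ E] (f : E →ᵃ[ℝ] ℝ) (hf : f.linear ≠ 0) {U : Set E} (hU : IsOpen U)
    {y : E} (hyU : y ∈ U) (hfy : f y = 0) :
    0 < μH[(finrank ℝ E : ℝ) - 1] (U ∩ {x | f x = 0}) := by
  set A := AffineSubspace.mk' y (LinearMap.ker f.linear)
  have hA : (A : Set E) = {x | f x = 0} := by
    ext x
    rw [SetLike.mem_coe, AffineSubspace.mem_mk', LinearMap.mem_ker, f.linearMap_vsub, hfy,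
      vsub_eq_sub, sub_zero, mem_ofPred_eq]
  have hdim : (finrank ℝ E : ℝ) - 1 = finrank ℝ A.direction := by
    rw [AffineSubspace.direction_mk', ← Module.Dual.finrank_ker_add_one_of_ne_zero hf]
    push_cast
    ring
  rw [hdim, ← hA]
  exact A.hausdorffMeasure_inter_pos hU ⟨y, hyU, AffineSubspace.self_mem_mk' _ _⟩

end

theorem stmt9_general (N : ℕ) (P : Set (EuclideanSpace ℝ (Fin N)))
    (hpoly : ∃ (m : ℕ) (g : Fin m → (EuclideanSpace ℝ (Fin N) →ᵃ[ℝ] ℝ)),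
      P = ⋂ i, {x | g i x ≤ 0})
    (hvol : 0 < volume P)
    (f : EuclideanSpace ℝ (Fin N) →ᵃ[ℝ] ℝ)
    (hnotface : ¬ ∃ g : EuclideanSpace ℝ (Fin N) →ᵃ[ℝ] ℝ,
      (∀ x ∈ P, g x ≤ 0) ∧ P ∩ {x | f x = 0} = P ∩ {x | g x = 0}) :
    0 < MeasureTheory.Measure.hausdorffMeasure ((N : ℝ) - 1) (P ∩ {x | f x = 0}) := by
  obtain ⟨m, g, rfl⟩ := hpoly
  have hconv := convex_iInter_setOf_nonpos g
  obtain ⟨a, haP, hfa⟩ := exists_pos_of_not_isFace hnotface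
  obtain ⟨b, hbP, hfb⟩ := exists_neg_of_not_isFace hnotface
  obtain ⟨y, hy, hfy⟩ := hconv.exists_mem_interior_eq_zero f
    (hconv.interior_nonempty_of_measure_pos volume hvol) haP hbP hfa hfb
  have hf : f.linear ≠ 0 := fun h => by
    obtain ⟨q, rfl⟩ := f.linear_eq_zero_iff_exists_const.1 h
    rw [AffineMap.const_apply] at hfa hfb
    linarith
  have hpos := f.hausdorffMeasure_inter_setOf_eq_zero_pos hf isOpen_interior hy hfy
  rw [finrank_euclideanSpace_fin] at hpos
  exact hpos.trans_le (measure_mono (inter_subset_inter_left _ interior_subset))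

/-- Let `P ⊆ ℝ^N` be a polyhedron (an intersection of finitely many closed
half-spaces) with positive `N`-dimensional Lebesgue measure, and let `f` be an affine
function such that `Q = P ∩ {f = 0}` is nonempty. If `Q` is not a face of `P`, then the
`(N−1)`-dimensional Hausdorff measure of `Q` is positive. -/
theorem stmt9 (N : ℕ) (P : Set (EuclideanSpace ℝ (Fin N)))
    (hpoly : ∃ (m : ℕ) (g : Fin m → (EuclideanSpace ℝ (Fin N) →ᵃ[ℝ] ℝ)),
      P = ⋂ i, {x | g i x ≤ 0})
    (hvol : 0 < volume P)
    (f : EuclideanSpace ℝ (Fin N) →ᵃ[ℝ] ℝ)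
    (hQne : (P ∩ {x | f x = 0}).Nonempty)
    (hnotface : ¬ ∃ g : EuclideanSpace ℝ (Fin N) →ᵃ[ℝ] ℝ,
      (∀ x ∈ P, g x ≤ 0) ∧ P ∩ {x | f x = 0} = P ∩ {x | g x = 0}) :
    0 < MeasureTheory.Measure.hausdorffMeasure ((N : ℝ) - 1) (P ∩ {x | f x = 0}) :=
  stmt9_general N P hpoly hvol f hnotface
end

section
/- Let P ⊆ {x ∈ ℝ^N : x_N ≥ 0} be an unbounded polyhedron with positive N-dimensional Lebesgue measure such that M := P ∩ {x ∈ ℝ^N : x_N = 0} is nonempty and bounded. Then for every δ > 0 there exists a constant C > 0 such that S_P(t) ≤ C t^{N−1} for all t ≥ δ. -/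
/-!
Pick `x₀` in the base `M`. By convexity, the homothety of ratio `δ / t` centred at `x₀` maps
the slice at height `t` into the slice at height `δ`, so
`S_P(t) ≤ (t / δ) ^ (N - 1) · S_P(δ)`, and it remains to see that the slice at height `δ` is
bounded. If it were not, it would contain a ray, whose horizontal direction is then a recession
direction of the closed convex set `P`; the ray from `x₀` in that direction lies in `M`,
contradicting the boundedness of `M`.
-/

open MeasureTheory Bornology Filter Topology Set

section Recession

variable {E : Type*} [NormedAddCommGroup E] [NormedSpace ℝ E] {C : Set E}

/-- The limit of the unit vectors pointing from `c` to points of `C` far away. -/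
lemma Convex.exists_ray_of_not_isBounded [FiniteDimensional ℝ E] (hC : Convex ℝ C)
    (hcl : IsClosed C) {c : E} (hc : c ∈ C) (hub : ¬ IsBounded C) :
    ∃ v ≠ 0, ∀ s : ℝ, 0 ≤ s → c + s • v ∈ C := by
  simp only [Metric.isBounded_iff_subset_closedBall c, not_exists, not_subset,
    Metric.mem_closedBall, not_le] at hub
  choose y hyC hy using fun k : ℕ => hub k
  have hfar : Tendsto (fun k => ‖y k - c‖) atTop atTop :=
    tendsto_atTop_mono (fun k => by simpa [dist_eq_norm] using (hy k).le)
      tendsto_natCast_atTop_atTop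
  have hpos : ∀ k, 0 < ‖y k - c‖ := fun k =>
    (Nat.cast_nonneg k).trans_lt (dist_eq_norm (y k) c ▸ hy k)
  have hne : ∀ k, y k - c ≠ 0 := fun k => norm_pos_iff.1 (hpos k)
  set u : ℕ → E := fun k => ‖y k - c‖⁻¹ • (y k - c)
  have hu : ∀ k, u k ∈ Metric.sphere (0 : E) 1 := fun k => by
    simpa using norm_smul_inv_norm (𝕜 := ℝ) (hne k)
  obtain ⟨v, hv, φ, hφ, hφv⟩ := (isCompact_sphere (0 : E) 1).tendsto_subseq hu
  refine ⟨v, ne_zero_of_mem_unit_sphere ⟨v, hv⟩, fun s hs => ?_⟩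
  refine hcl.mem_of_tendsto ((hφv.const_smul s).const_add c) ?_
  filter_upwards [(hfar.comp hφ.tendsto_atTop).eventually_ge_atTop s] with k hk
  have hmem := hC.add_smul_sub_mem hc (hyC (φ k))
    ⟨div_nonneg hs (hpos _).le, (div_le_one (hpos _)).2 hk⟩
  rwa [div_eq_mul_inv, mul_smul] at hmem

lemma Convex.add_smul_mem_of_ray (hC : Convex ℝ C) (hcl : IsClosed C) {c v : E}
    (hray : ∀ s : ℝ, 0 ≤ s → c + s • v ∈ C) {x : E} (hx : x ∈ C) {s : ℝ} (hs : 0 ≤ s) :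
    x + s • v ∈ C := by
  have hf : Tendsto (fun l : ℝ => (1 - l) • x + l • c + s • v) (𝓝[>] 0) (𝓝 (x + s • v)) := by
    refine (Continuous.tendsto' ?_ 0 _ (by simp)).mono_left nhdsWithin_le_nhds
    fun_prop
  refine hcl.mem_of_tendsto hf ?_
  filter_upwards [Ioo_mem_nhdsGT one_pos] with l ⟨hl0, hl1⟩
  have hmem := hC hx (hray (s / l) (div_nonneg hs hl0.le)) (sub_nonneg.2 hl1.le) hl0.le
    (sub_add_cancel 1 l)
  rwa [smul_add, smul_smul, mul_div_cancel₀ s hl0.ne', ← add_assoc] at hmem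

lemma eq_zero_of_isBounded_of_ray {S : Set E} (hS : IsBounded S) {x v : E}
    (hray : ∀ s : ℝ, 0 ≤ s → x + s • v ∈ S) : v = 0 := by
  obtain ⟨R, hR⟩ := isBounded_iff_forall_norm_le.1 hS
  by_contra hv
  have hpos : 0 < ‖v‖ := norm_pos_iff.2 hv
  have hR0 : 0 ≤ R := (norm_nonneg x).trans (hR x (by simpa using hray 0 le_rfl))
  set s := (R + ‖x‖ + 1) / ‖v‖
  have hs : 0 ≤ s := by positivity
  have hsv : ‖s • v‖ = R + ‖x‖ + 1 := by
    rw [norm_smul, Real.norm_of_nonneg hs, div_mul_cancel₀ _ hpos.ne']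
  have htri := norm_le_add_norm_add (s • v) x
  rw [add_comm (s • v) x] at htri
  linarith [hR _ (hray s hs)]

end Recession

section Slice

variable {n : ℕ} {C : Set (Fin (n + 1) → ℝ)}

lemma Fin.snoc_smul_add_smul (a b : ℝ) (x y : Fin n → ℝ) (s t : ℝ) :
    (Fin.snoc (a • x + b • y) (a * s + b * t) : Fin (n + 1) → ℝ) =
      a • Fin.snoc x s + b • Fin.snoc y t := by
  ext i
  cases i using Fin.lastCases <;> simp

def slice (C : Set (Fin (n + 1) → ℝ)) (t : ℝ) : Set (Fin n → ℝ) :=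
  {x' | Fin.snoc x' t ∈ C}

lemma isClosed_slice (hC : IsClosed C) (t : ℝ) : IsClosed (slice C t) :=
  hC.preimage (by fun_prop)

lemma convex_slice (hC : Convex ℝ C) (t : ℝ) : Convex ℝ (slice C t) := by
  intro x hx y hy a b ha hb hab
  have hmem := hC hx hy ha hb hab
  rwa [← Fin.snoc_smul_add_smul, ← add_mul, hab, one_mul] at hmem

lemma isBounded_slice (hC : Convex ℝ C) (hcl : IsClosed C)
    {x₀ : Fin (n + 1) → ℝ} (hx₀ : x₀ ∈ C ∩ {x | x (Fin.last n) = 0})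
    (hMbd : IsBounded (C ∩ {x | x (Fin.last n) = 0})) (t : ℝ) :
    IsBounded (slice C t) := by
  by_contra hub
  obtain ⟨c, hc⟩ := nonempty_of_not_isBounded hub
  obtain ⟨v, hv, hray⟩ :=
    (convex_slice hC t).exists_ray_of_not_isBounded (isClosed_slice hcl t) hc hub
  have hrayC : ∀ s : ℝ, 0 ≤ s → Fin.snoc c t + s • Fin.snoc v 0 ∈ C := fun s hs => by
    have h : Fin.snoc ((1 : ℝ) • c + s • v) (1 * t + s * 0) ∈ C := by
      simpa [slice] using hray s hs
    rwa [Fin.snoc_smul_add_smul, one_smul] at h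
  have hrayM : ∀ s : ℝ, 0 ≤ s → x₀ + s • Fin.snoc v 0 ∈ C ∩ {x | x (Fin.last n) = 0} :=
    fun s hs => ⟨hC.add_smul_mem_of_ray hcl hrayC hx₀.1 hs, by simpa using hx₀.2⟩
  have hv0 : v = Fin.init (0 : Fin (n + 1) → ℝ) := by
    simpa using congrArg Fin.init (eq_zero_of_isBounded_of_ray hMbd hrayM)
  exact hv hv0

lemma homothety_image_slice_subset (hC : Convex ℝ C) {x₀ : Fin (n + 1) → ℝ}
    (hx₀ : x₀ ∈ C ∩ {x | x (Fin.last n) = 0}) {r : ℝ} (hr0 : 0 ≤ r) (hr1 : r ≤ 1) (t : ℝ) :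
    AffineMap.homothety (Fin.init x₀) r '' slice C t ⊆ slice C (r * t) := by
  rintro _ ⟨x, hx, rfl⟩
  have hmem := hC hx₀.1 hx (sub_nonneg.2 hr1) hr0 (sub_add_cancel 1 r)
  rwa [← Fin.snoc_init_self x₀, hx₀.2, ← Fin.snoc_smul_add_smul, mul_zero, zero_add,
    ← AffineMap.lineMap_apply_module, ← AffineMap.homothety_eq_lineMap] at hmem

lemma volume_slice_le (hC : Convex ℝ C) {x₀ : Fin (n + 1) → ℝ}
    (hx₀ : x₀ ∈ C ∩ {x | x (Fin.last n) = 0}) {δ t : ℝ} (hδ : 0 < δ) (ht : δ ≤ t) :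
    volume (slice C t) ≤ ENNReal.ofReal ((t / δ) ^ n) * volume (slice C δ) := by
  have ht0 : 0 < t := hδ.trans_le ht
  have himage := measure_mono (μ := volume) <| homothety_image_slice_subset hC hx₀
    (div_nonneg hδ.le ht0.le) ((div_le_one ht0).2 ht) t
  rw [Measure.addHaar_image_homothety, Module.finrank_fin_fun, div_mul_cancel₀ δ ht0.ne',
    abs_of_nonneg (by positivity)] at himage
  calc volume (slice C t)
      = ENNReal.ofReal ((t / δ) ^ n) * (ENNReal.ofReal ((δ / t) ^ n) * volume (slice C t)) := by
        have hone : (t / δ) ^ n * (δ / t) ^ n = 1 := by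
          rw [← mul_pow, div_mul_div_cancel₀ hδ.ne', div_self ht0.ne', one_pow]
        rw [← mul_assoc, ← ENNReal.ofReal_mul (by positivity), hone, ENNReal.ofReal_one,
          one_mul]
    _ ≤ ENNReal.ofReal ((t / δ) ^ n) * volume (slice C δ) := by gcongr

end Slice

theorem stmt11_general (n : ℕ) (P : Set (Fin (n+1) → ℝ))
    (hpoly : ∃ (m : ℕ) (g : Fin m → ((Fin (n+1) → ℝ) →ᵃ[ℝ] ℝ)),
      P = ⋂ i, {x | g i x ≤ 0})
    (hMne : (P ∩ {x | x (Fin.last n) = 0}).Nonempty)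
    (hMbd : Bornology.IsBounded (P ∩ {x | x (Fin.last n) = 0})) :
    ∀ δ : ℝ, 0 < δ → ∃ C : ℝ, 0 < C ∧ ∀ t : ℝ, δ ≤ t →
      volume {x' : Fin n → ℝ | Fin.snoc x' t ∈ P} ≤ ENNReal.ofReal (C * t ^ n) := by
  obtain ⟨m, g, hP⟩ := hpoly
  have hconv : Convex ℝ P := hP ▸ convex_iInter fun i => (convex_Iic 0).affine_preimage (g i)
  have hclosed : IsClosed P := hP ▸ isClosed_iInter fun i =>
    isClosed_Iic.preimage (g i).continuous_of_finiteDimensional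
  obtain ⟨x₀, hx₀⟩ := hMne
  intro δ hδ
  set K := (volume (slice P δ)).toReal
  have hK : volume (slice P δ) = ENNReal.ofReal K :=
    (ENNReal.ofReal_toReal (isBounded_slice hconv hclosed hx₀ hMbd δ).measure_lt_top.ne).symm
  refine ⟨(K + 1) / δ ^ n, by positivity, fun t ht => ?_⟩
  have ht0 : 0 < t := hδ.trans_le ht
  calc volume (slice P t)
      ≤ ENNReal.ofReal ((t / δ) ^ n) * volume (slice P δ) :=
        volume_slice_le hconv hx₀ hδ ht
    _ = ENNReal.ofReal ((t / δ) ^ n * K) := by rw [hK, ENNReal.ofReal_mul (by positivity)]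
    _ ≤ ENNReal.ofReal ((K + 1) / δ ^ n * t ^ n) := by
        refine ENNReal.ofReal_le_ofReal ?_
        rw [div_pow, div_mul_eq_mul_div, div_mul_eq_mul_div, mul_comm]
        gcongr
        linarith

/-- Let `P ⊆ {x ∈ ℝ^N : x_N ≥ 0}` (here `N = n+1`) be an unbounded polyhedron
of positive `N`-dimensional Lebesgue measure whose base `M = P ∩ {x_N = 0}` is nonempty
and bounded. Then for every `δ > 0` there is `C > 0` with `S_P(t) ≤ C t^{N−1}` for all
`t ≥ δ`, where `S_P(t)` is the `(N−1)`-dimensional measure of the slice of `P` at height `t`. -/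
theorem stmt11 (n : ℕ) (P : Set (Fin (n+1) → ℝ))
    (hpoly : ∃ (m : ℕ) (g : Fin m → ((Fin (n+1) → ℝ) →ᵃ[ℝ] ℝ)),
      P = ⋂ i, {x | g i x ≤ 0})
    (hPsub : ∀ x ∈ P, 0 ≤ x (Fin.last n))
    (hunbd : ¬ Bornology.IsBounded P)
    (hvol : 0 < volume P)
    (hMne : (P ∩ {x | x (Fin.last n) = 0}).Nonempty)
    (hMbd : Bornology.IsBounded (P ∩ {x | x (Fin.last n) = 0})) :
    ∀ δ : ℝ, 0 < δ → ∃ C : ℝ, 0 < C ∧ ∀ t : ℝ, δ ≤ t →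
      volume {x' : Fin n → ℝ | Fin.snoc x' t ∈ P} ≤ ENNReal.ofReal (C * t ^ n) :=
  stmt11_general n P hpoly hMne hMbd
end

section
/- There exist C ≥ 1 and r₀ ∈ (0,1) such that for all 0 < r < r₀: C⁻¹ r^{−11/3} ≤ ∫_{(0,1]²} (x₁³ r³ + (x₁² + x₂) r⁴ + x₁ r⁵ + r⁶)⁻¹ dx₁ dx₂ ≤ C r^{−11/3}. -/
open MeasureTheory Set

/-!
Split the square at `x₁ = c := r^{1/3}`. For `x₁ > c` we have `r ≤ x₁³`, so every term of the
denominator is at most `x₁³r³`: the integrand is comparable to `r⁻³x₁⁻³` there, and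
`∫_c^1 r⁻³x⁻³ dx ≍ r⁻³c⁻² = r^{-11/3}`. This gives the lower bound and part of the upper bound.
For `x₁ ≤ c`, weighted AM-GM gives `x₁³r³/6 + 5x₂r⁴/6 ≥ x₁^{1/2} x₂^{5/6} r^{23/6}`, and the
reciprocal of the right-hand side is integrable with integral `12 c^{1/2} r^{-23/6} = 12 r^{-11/3}`.
-/

lemma integral_Ioc_rpow {a b e : ℝ} (hab : a ≤ b) (h : -1 < e ∨ e ≠ -1 ∧ (0 : ℝ) ∉ uIcc a b) :
    ∫ x in Ioc a b, x ^ e = (b ^ (e + 1) - a ^ (e + 1)) / (e + 1) := by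
  rw [← intervalIntegral.integral_of_le hab, integral_rpow h]

lemma integrableOn_Ioc_rpow {a b e : ℝ} (hab : a ≤ b) (h : -1 < e ∨ (0 : ℝ) ∉ uIcc a b) :
    IntegrableOn (fun x => x ^ e) (Ioc a b) := by
  rw [← uIoc_of_le hab, ← intervalIntegrable_iff]
  rcases h with he | h0
  · exact intervalIntegral.intervalIntegrable_rpow' he
  · exact intervalIntegral.intervalIntegrable_rpow (Or.inr h0)

lemma integrableOn_of_nonneg_of_le {α : Type*} [MeasurableSpace α] {μ : Measure α} {s : Set α}
    {f g : α → ℝ} (hg : IntegrableOn g s μ) (hf : AEStronglyMeasurable f (μ.restrict s))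
    (hs : MeasurableSet s) (h0 : ∀ x ∈ s, 0 ≤ f x) (hfg : ∀ x ∈ s, f x ≤ g x) :
    IntegrableOn f s μ :=
  Integrable.mono' hg hf <| (ae_restrict_iff' hs).2 <| ae_of_all _ fun x hx => by
    rw [Real.norm_of_nonneg (h0 x hx)]
    exact hfg x hx

lemma integrableOn_prod_mul {α β : Type*} [MeasurableSpace α] [MeasurableSpace β]
    {μ : Measure α} {ν : Measure β} [SFinite μ] [SFinite ν] {s : Set α} {t : Set β}
    {f : α → ℝ} {g : β → ℝ} (hf : IntegrableOn f s μ) (hg : IntegrableOn g t ν) :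
    IntegrableOn (fun p : α × β => f p.1 * g p.2) (s ×ˢ t) (μ.prod ν) := by
  rw [IntegrableOn, ← Measure.prod_restrict]
  exact hf.mul_prod hg

lemma integrableOn_comp_fst_prod {α β : Type*} [MeasurableSpace α] [MeasurableSpace β]
    {μ : Measure α} {ν : Measure β} [SFinite μ] [SFinite ν] {s : Set α} {t : Set β}
    [IsFiniteMeasure (ν.restrict t)] {f : α → ℝ} (hf : IntegrableOn f s μ) :
    IntegrableOn (fun p : α × β => f p.1) (s ×ˢ t) (μ.prod ν) := by
  rw [IntegrableOn, ← Measure.prod_restrict]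
  exact hf.comp_fst _

lemma setIntegral_comp_fst_prod {α β : Type*} [MeasurableSpace α] [MeasurableSpace β]
    {μ : Measure α} {ν : Measure β} [SFinite μ] [SFinite ν] (f : α → ℝ) (s : Set α) (t : Set β) :
    ∫ p in s ×ˢ t, f p.1 ∂μ.prod ν = ν.real t * ∫ x in s, f x ∂μ := by
  rw [← Measure.prod_restrict, integral_fun_fst, measureReal_restrict_apply_univ, smul_eq_mul]

lemma zero_notMem_uIcc_of_pos {a b : ℝ} (ha : 0 < a) (hab : a ≤ b) : (0 : ℝ) ∉ uIcc a b := by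
  rw [uIcc_of_le hab]
  exact notMem_Icc_of_lt ha

def denom (r : ℝ) (p : ℝ × ℝ) : ℝ :=
  p.1 ^ 3 * r ^ 3 + (p.1 ^ 2 + p.2) * r ^ 4 + p.1 * r ^ 5 + r ^ 6

lemma measurable_inv_denom (r : ℝ) : Measurable fun p => (denom r p)⁻¹ := by
  unfold denom
  fun_prop

section Pointwise
variable {r x y : ℝ}

lemma denom_pos (hr : 0 < r) (hx : 0 ≤ x) (hy : 0 ≤ y) : 0 < denom r (x, y) := by
  unfold denom
  positivity

lemma pow_mul_le_denom (hr : 0 ≤ r) (hx : 0 ≤ x) (hy : 0 ≤ y) :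
    x ^ 3 * r ^ 3 ≤ denom r (x, y) := by
  dsimp only [denom]
  have : 0 ≤ (x ^ 2 + y) * r ^ 4 + x * r ^ 5 + r ^ 6 := by positivity
  linarith

lemma denom_le_five_mul (hr : 0 ≤ r) (hx : 0 ≤ x) (hrx : r ≤ x ^ 3) (hx1 : x ≤ 1)
    (hy1 : y ≤ 1) : denom r (x, y) ≤ 5 * (x ^ 3 * r ^ 3) := by
  have hx3 : x ^ 3 ≤ x := pow_le_of_le_one hx hx1 (by norm_num)
  have hrx' : r ≤ x := hrx.trans hx3
  have hr1 : r ≤ 1 := hrx'.trans hx1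
  dsimp only [denom]
  have h1 : x ^ 2 * r ^ 4 ≤ x ^ 3 * r ^ 3 := by
    have := mul_le_mul_of_nonneg_left hrx' (by positivity : 0 ≤ x ^ 2 * r ^ 3)
    linarith
  have h2 : y * r ^ 4 ≤ x ^ 3 * r ^ 3 := by
    have := mul_le_mul_of_nonneg_left hrx (by positivity : 0 ≤ r ^ 3)
    nlinarith [pow_nonneg hr 4]
  have h3 : x * r ^ 5 ≤ x ^ 3 * r ^ 3 := by
    have := mul_le_mul hrx' hrx' hr hx
    have := mul_le_mul_of_nonneg_left this (by positivity : 0 ≤ x * r ^ 3)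
    linarith
  have h4 : r ^ 6 ≤ x ^ 3 * r ^ 3 := by
    have : r ^ 3 ≤ x ^ 3 := (pow_le_of_le_one hr hr1 (by norm_num)).trans hrx
    have := mul_le_mul_of_nonneg_left this (by positivity : 0 ≤ r ^ 3)
    linarith
  linarith

lemma rpow_mul_le_denom (hr : 0 ≤ r) (hx : 0 ≤ x) (hy : 0 ≤ y) :
    x ^ (1 / 2 : ℝ) * y ^ (5 / 6 : ℝ) * r ^ (23 / 6 : ℝ) ≤ denom r (x, y) := by
  have amgm := Real.geom_mean_le_arith_mean2_weighted (w₁ := 1 / 6) (w₂ := 5 / 6)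
    (p₁ := x ^ 3 * r ^ 3) (p₂ := y * r ^ 4) (by norm_num) (by norm_num) (by positivity)
    (by positivity) (by norm_num)
  have hgeom : (x ^ 3 * r ^ 3) ^ (1 / 6 : ℝ) * (y * r ^ 4) ^ (5 / 6 : ℝ)
      = x ^ (1 / 2 : ℝ) * y ^ (5 / 6 : ℝ) * r ^ (23 / 6 : ℝ) := by
    rw [Real.mul_rpow (by positivity) (by positivity), Real.mul_rpow hy (by positivity),
      ← Real.rpow_natCast_mul hx, ← Real.rpow_natCast_mul hr, ← Real.rpow_natCast_mul hr,
      mul_mul_mul_comm, ← Real.rpow_add_of_nonneg hr (by norm_num) (by norm_num)]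
    norm_num
  rw [← hgeom]
  refine amgm.trans ?_
  have h₁ : 0 ≤ x ^ 3 * r ^ 3 := by positivity
  have h₂ : 0 ≤ y * r ^ 4 := by positivity
  have h₃ : 0 ≤ x ^ 2 * r ^ 4 + x * r ^ 5 + r ^ 6 := by positivity
  dsimp only [denom]
  linarith [show (x ^ 2 + y) * r ^ 4 = x ^ 2 * r ^ 4 + y * r ^ 4 by ring]

lemma inv_denom_le_rpow (hr : 0 < r) (hx : 0 < x) (hy : 0 < y) :
    (denom r (x, y))⁻¹ ≤ r ^ (-(23 / 6) : ℝ) * (x ^ (-(1 / 2) : ℝ) * y ^ (-(5 / 6) : ℝ)) := by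
  rw [Real.rpow_neg hr.le, Real.rpow_neg hx.le, Real.rpow_neg hy.le, ← mul_inv, ← mul_inv,
    mul_comm]
  exact inv_anti₀ (by positivity) (rpow_mul_le_denom hr.le hx.le hy.le)

lemma inv_denom_le_inv_pow (hr : 0 < r) (hx : 0 < x) (hy : 0 ≤ y) :
    (denom r (x, y))⁻¹ ≤ (r ^ 3)⁻¹ * x ^ (-3 : ℝ) := by
  rw [Real.rpow_neg hx.le, Real.rpow_ofNat, ← mul_inv, mul_comm]
  exact inv_anti₀ (by positivity) (pow_mul_le_denom hr.le hx.le hy)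

lemma inv_pow_le_inv_denom (hr : 0 < r) (hx : 0 < x) (hrx : r ≤ x ^ 3) (hx1 : x ≤ 1)
    (hy : 0 ≤ y) (hy1 : y ≤ 1) :
    (r ^ 3)⁻¹ * (x ^ (-3 : ℝ) / 5) ≤ (denom r (x, y))⁻¹ := by
  rw [Real.rpow_neg hx.le, Real.rpow_ofNat, div_eq_mul_inv, ← mul_inv, ← mul_inv,
    mul_comm (r ^ 3)]
  exact inv_anti₀ (denom_pos hr hx.le hy)
    (by linarith [denom_le_five_mul hr.le hx.le hrx hx1 hy1])

end Pointwise

section Strips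
variable {r c : ℝ}

lemma integrableOn_rpow_mul_rpow {a b d : ℝ} (ha : -1 < a) (hb : -1 < b) (hc : 0 ≤ c)
    (hd : 0 ≤ d) :
    IntegrableOn (fun p : ℝ × ℝ => p.1 ^ a * p.2 ^ b) (Ioc 0 c ×ˢ Ioc 0 d) :=
  integrableOn_prod_mul (integrableOn_Ioc_rpow hc (Or.inl ha))
    (integrableOn_Ioc_rpow hd (Or.inl hb))

lemma setIntegral_rpow_mul_rpow {a b d : ℝ} (ha : -1 < a) (hb : -1 < b) (hc : 0 ≤ c)
    (hd : 0 ≤ d) :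
    ∫ p in Ioc 0 c ×ˢ Ioc 0 d, p.1 ^ a * p.2 ^ b
      = c ^ (a + 1) * d ^ (b + 1) / ((a + 1) * (b + 1)) := by
  rw [Measure.volume_eq_prod, setIntegral_prod_mul (fun x : ℝ => x ^ a) (fun y : ℝ => y ^ b),
    integral_Ioc_rpow hc (Or.inl ha), integral_Ioc_rpow hd (Or.inl hb),
    Real.zero_rpow (by linarith), Real.zero_rpow (by linarith), sub_zero, sub_zero,
    div_mul_div_comm]

lemma integrableOn_inv_denom_Ioc_zero (hr : 0 < r) (hc : 0 ≤ c) :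
    IntegrableOn (fun p => (denom r p)⁻¹) (Ioc 0 c ×ˢ Ioc 0 1) :=
  integrableOn_of_nonneg_of_le
    ((integrableOn_rpow_mul_rpow (by norm_num) (by norm_num) hc zero_le_one).const_mul _)
    (measurable_inv_denom r).aestronglyMeasurable (measurableSet_Ioc.prod measurableSet_Ioc)
    (fun _ hp => inv_nonneg.2 (denom_pos hr hp.1.1.le hp.2.1.le).le)
    (fun _ hp => inv_denom_le_rpow hr hp.1.1 hp.2.1)

lemma setIntegral_inv_denom_Ioc_zero_le (hr : 0 < r) (hc : 0 ≤ c) :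
    ∫ p in Ioc 0 c ×ˢ Ioc 0 1, (denom r p)⁻¹ ≤ r ^ (-(23 / 6) : ℝ) * (12 * c ^ (1 / 2 : ℝ)) := by
  calc ∫ p in Ioc 0 c ×ˢ Ioc 0 1, (denom r p)⁻¹
      ≤ ∫ p in Ioc 0 c ×ˢ Ioc 0 1,
          r ^ (-(23 / 6) : ℝ) * (p.1 ^ (-(1 / 2) : ℝ) * p.2 ^ (-(5 / 6) : ℝ)) :=
        setIntegral_mono_of_nonneg
          (fun _ hp => inv_nonneg.2 (denom_pos hr hp.1.1.le hp.2.1.le).le)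
          (fun _ hp => inv_denom_le_rpow hr hp.1.1 hp.2.1)
          ((integrableOn_rpow_mul_rpow (by norm_num) (by norm_num) hc zero_le_one).const_mul _)
    _ = r ^ (-(23 / 6) : ℝ) * (12 * c ^ (1 / 2 : ℝ)) := by
        rw [integral_const_mul,
          setIntegral_rpow_mul_rpow (by norm_num) (by norm_num) hc zero_le_one]
        congr 1
        norm_num
        ring


lemma integrableOn_rpow_neg_three (hc : 0 < c) (hc1 : c ≤ 1) :
    IntegrableOn (fun p : ℝ × ℝ => p.1 ^ (-3 : ℝ)) (Ioc c 1 ×ˢ Ioc (0 : ℝ) 1) :=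
  integrableOn_comp_fst_prod (integrableOn_Ioc_rpow hc1 (Or.inr (zero_notMem_uIcc_of_pos hc hc1)))

lemma setIntegral_rpow_neg_three (hc : 0 < c) (hc1 : c ≤ 1) :
    ∫ p in Ioc c 1 ×ˢ Ioc (0 : ℝ) 1, p.1 ^ (-3 : ℝ) = (c ^ (-2 : ℝ) - 1) / 2 := by
  rw [Measure.volume_eq_prod, setIntegral_comp_fst_prod (fun x : ℝ => x ^ (-3 : ℝ)),
    integral_Ioc_rpow hc1 (Or.inr ⟨by norm_num, zero_notMem_uIcc_of_pos hc hc1⟩)]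
  norm_num
  ring

lemma integrableOn_inv_denom_Ioc_one (hr : 0 < r) (hc : 0 < c) (hc1 : c ≤ 1) :
    IntegrableOn (fun p => (denom r p)⁻¹) (Ioc c 1 ×ˢ Ioc 0 1) :=
  integrableOn_of_nonneg_of_le ((integrableOn_rpow_neg_three hc hc1).const_mul _)
    (measurable_inv_denom r).aestronglyMeasurable (measurableSet_Ioc.prod measurableSet_Ioc)
    (fun _ hp => inv_nonneg.2 (denom_pos hr (hc.trans hp.1.1).le hp.2.1.le).le)
    (fun _ hp => inv_denom_le_inv_pow hr (hc.trans hp.1.1) hp.2.1.le)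

lemma setIntegral_inv_denom_Ioc_one_le (hr : 0 < r) (hc : 0 < c) (hc1 : c ≤ 1) :
    ∫ p in Ioc c 1 ×ˢ Ioc 0 1, (denom r p)⁻¹ ≤ (r ^ 3)⁻¹ * ((c ^ (-2 : ℝ) - 1) / 2) := by
  rw [← setIntegral_rpow_neg_three hc hc1, ← integral_const_mul]
  exact setIntegral_mono_on (integrableOn_inv_denom_Ioc_one hr hc hc1)
    ((integrableOn_rpow_neg_three hc hc1).const_mul _) (measurableSet_Ioc.prod measurableSet_Ioc)
    (fun _ hp => inv_denom_le_inv_pow hr (hc.trans hp.1.1) hp.2.1.le)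

lemma le_setIntegral_inv_denom_Ioc_one (hr : 0 < r) (hc : 0 < c) (hrc : r ≤ c ^ 3)
    (hc1 : c ≤ 1) :
    (r ^ 3)⁻¹ * ((c ^ (-2 : ℝ) - 1) / 10) ≤ ∫ p in Ioc c 1 ×ˢ Ioc 0 1, (denom r p)⁻¹ := by
  have hint : IntegrableOn (fun p : ℝ × ℝ => (r ^ 3)⁻¹ * (p.1 ^ (-3 : ℝ) / 5))
      (Ioc c 1 ×ˢ Ioc 0 1) := ((integrableOn_rpow_neg_three hc hc1).div_const _).const_mul _
  calc (r ^ 3)⁻¹ * ((c ^ (-2 : ℝ) - 1) / 10)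
      = ∫ p in Ioc c 1 ×ˢ Ioc 0 1, (r ^ 3)⁻¹ * (p.1 ^ (-3 : ℝ) / 5) := by
        rw [integral_const_mul, integral_div, setIntegral_rpow_neg_three hc hc1]
        ring
    _ ≤ ∫ p in Ioc c 1 ×ˢ Ioc 0 1, (denom r p)⁻¹ :=
        setIntegral_mono_on hint (integrableOn_inv_denom_Ioc_one hr hc hc1)
          (measurableSet_Ioc.prod measurableSet_Ioc) fun p hp =>
            inv_pow_le_inv_denom hr (hc.trans hp.1.1)
              (hrc.trans (pow_le_pow_left₀ hc.le hp.1.1.le 3)) hp.1.2 hp.2.1.le hp.2.2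

lemma setIntegral_inv_denom_eq_add (hr : 0 < r) (hc : 0 < c) (hc1 : c ≤ 1) :
    ∫ p in Ioc 0 1 ×ˢ Ioc 0 1, (denom r p)⁻¹
      = (∫ p in Ioc 0 c ×ˢ Ioc 0 1, (denom r p)⁻¹) +
          ∫ p in Ioc c 1 ×ˢ Ioc 0 1, (denom r p)⁻¹ := by
  have hsplit : Ioc (0 : ℝ) 1 ×ˢ Ioc (0 : ℝ) 1 = Ioc 0 c ×ˢ Ioc 0 1 ∪ Ioc c 1 ×ˢ Ioc 0 1 := by
    rw [← union_prod, Ioc_union_Ioc_eq_Ioc hc.le hc1]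
  rw [hsplit]
  exact setIntegral_union (disjoint_prod.2 (Or.inl (Ioc_disjoint_Ioc_of_le le_rfl)))
    (measurableSet_Ioc.prod measurableSet_Ioc)
    (integrableOn_inv_denom_Ioc_zero hr hc.le) (integrableOn_inv_denom_Ioc_one hr hc hc1)

end Strips

section CubeRootSplit
variable {r : ℝ}

lemma rpow_one_third_pow_three (hr : 0 ≤ r) : (r ^ (1 / 3 : ℝ)) ^ 3 = r := by
  rw [← Real.rpow_natCast, ← Real.rpow_mul hr]
  norm_num

lemma inv_pow_three_mul_rpow_one_third (hr : 0 < r) :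
    (r ^ 3)⁻¹ * (r ^ (1 / 3 : ℝ)) ^ (-2 : ℝ) = r ^ (-(11 / 3) : ℝ) := by
  rw [← Real.rpow_mul hr.le, ← Real.rpow_ofNat, ← Real.rpow_neg hr.le, ← Real.rpow_add hr]
  norm_num

lemma setIntegral_inv_denom_Ioc_zero_cbrt_le (hr : 0 < r) :
    ∫ p in Ioc 0 (r ^ (1 / 3 : ℝ)) ×ˢ Ioc 0 1, (denom r p)⁻¹ ≤ 12 * r ^ (-(11 / 3) : ℝ) := by
  convert setIntegral_inv_denom_Ioc_zero_le hr (Real.rpow_nonneg hr.le _) using 1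
  rw [mul_left_comm, ← Real.rpow_mul hr.le, ← Real.rpow_add hr]
  norm_num

lemma setIntegral_inv_denom_Ioc_cbrt_one_le (hr : 0 < r) (hr1 : r ≤ 1) :
    ∫ p in Ioc (r ^ (1 / 3 : ℝ)) 1 ×ˢ Ioc 0 1, (denom r p)⁻¹ ≤ r ^ (-(11 / 3) : ℝ) / 2 := by
  refine (setIntegral_inv_denom_Ioc_one_le hr (Real.rpow_pos_of_pos hr _)
    (Real.rpow_le_one hr.le hr1 (by norm_num))).trans ?_
  rw [← inv_pow_three_mul_rpow_one_third hr]
  have : 0 ≤ (r ^ 3)⁻¹ := by positivity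
  nlinarith

lemma le_setIntegral_inv_denom_Ioc_cbrt_one (hr : 0 < r) (hr8 : r ≤ 1 / 8) :
    r ^ (-(11 / 3) : ℝ) / 20 ≤ ∫ p in Ioc (r ^ (1 / 3 : ℝ)) 1 ×ˢ Ioc 0 1, (denom r p)⁻¹ := by
  set c := r ^ (1 / 3 : ℝ)
  have hc0 : 0 < c := Real.rpow_pos_of_pos hr _
  have hc3 : c ^ 3 = r := rpow_one_third_pow_three hr.le
  have hc2 : c ^ 2 ≤ 1 / 4 := by nlinarith
  have hZ : 4 ≤ c ^ (-2 : ℝ) := by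
    rw [Real.rpow_neg hc0.le, Real.rpow_ofNat, le_inv_comm₀ (by norm_num) (pow_pos hc0 2)]
    linarith
  refine le_trans ?_ (le_setIntegral_inv_denom_Ioc_one hr hc0 hc3.ge (by nlinarith))
  rw [← inv_pow_three_mul_rpow_one_third hr]
  have hY : 0 ≤ (r ^ 3)⁻¹ := by positivity
  nlinarith [mul_le_mul_of_nonneg_left hZ hY]

end CubeRootSplit

/-- `∫_{(0,1]²} (x₁³r³ + (x₁² + x₂)r⁴ + x₁r⁵ + r⁶)⁻¹ dx ≈ r^{−11/3}`
as `r → 0⁺`. -/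
theorem stmt18 :
    ∃ C : ℝ, 1 ≤ C ∧ ∃ r₀ : ℝ, 0 < r₀ ∧ r₀ < 1 ∧ ∀ r : ℝ, 0 < r → r < r₀ →
      C⁻¹ * r ^ (-(11/3) : ℝ) ≤
        (∫ x in (Set.Ioc (0:ℝ) 1) ×ˢ (Set.Ioc (0:ℝ) 1),
          (x.1 ^ 3 * r ^ 3 + (x.1 ^ 2 + x.2) * r ^ 4 + x.1 * r ^ 5 + r ^ 6)⁻¹) ∧
      (∫ x in (Set.Ioc (0:ℝ) 1) ×ˢ (Set.Ioc (0:ℝ) 1),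
          (x.1 ^ 3 * r ^ 3 + (x.1 ^ 2 + x.2) * r ^ 4 + x.1 * r ^ 5 + r ^ 6)⁻¹) ≤
        C * r ^ (-(11/3) : ℝ) := by
  refine ⟨20, by norm_num, 1 / 8, by norm_num, by norm_num, fun r hr hr8 => ?_⟩
  have hr1 : r ≤ 1 := by linarith
  have hc0 : 0 < r ^ (1 / 3 : ℝ) := Real.rpow_pos_of_pos hr _
  have hc1 : r ^ (1 / 3 : ℝ) ≤ 1 := Real.rpow_le_one hr.le hr1 (by norm_num)
  change _ ≤ ∫ p in _, (denom r p)⁻¹ ∧ ∫ p in _, (denom r p)⁻¹ ≤ _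
  rw [setIntegral_inv_denom_eq_add hr hc0 hc1]
  have hA0 : 0 ≤ ∫ p in Ioc 0 (r ^ (1 / 3 : ℝ)) ×ˢ Ioc 0 1, (denom r p)⁻¹ :=
    setIntegral_nonneg (measurableSet_Ioc.prod measurableSet_Ioc)
      fun _ hp => inv_nonneg.2 (denom_pos hr hp.1.1.le hp.2.1.le).le
  have hA := setIntegral_inv_denom_Ioc_zero_cbrt_le hr
  have hB := setIntegral_inv_denom_Ioc_cbrt_one_le hr hr1
  have hB' := le_setIntegral_inv_denom_Ioc_cbrt_one hr hr8.le
  constructor <;> linarith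
end
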